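/- arXiv:0710.1278 — 6 statements merged into one kernel-verified Lean document; each statement's English description precedes it below -/
import Mathlib

section
/- Let A be a matrix representation of a quiver Q over 𝔽 such that A_α is an identity matrix for some arrow α : p₁ → p₂ with p₁ ≠ p₂. Let Q' be the quiver obtained from Q by removing the arrow α and merging the vertices p₁ and p₂ into a single vertex p (each other arrow connecting p₁ and p₂ becomes a loop at p), and let A' be the representation of Q' obtained from A by removing A_α. Then for every miniversal deformation A'(λ₁,…,λ_k) of A', the deformation of A obtained from A'(λ₁,…,λ_k) by assigning the identity matrix to the arrow α is a miniversal deformation of A. -/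
open Matrix Filter Pointwise

/-- The space of matrix representations of a quiver with vertex set `V`,
arrow set `Arrow` (an arrow `α` goes from `src α` to `tgt α`), where the
vector space attached to the vertex `v` has basis indexed by `N v`:
the representation assigns to each arrow `α` a matrix in `𝔽^{N (tgt α) × N (src α)}`. -/
abbrev QRep (V Arrow : Type) (src tgt : Arrow → V) (N : V → Type) (𝔽 : Type) : Type :=
  ∀ α : Arrow, Matrix (N (tgt α)) (N (src α)) 𝔽

/-- The index set `Υ` of triples `(α, i, j)`. -/
abbrev QIdx (V Arrow : Type) (src tgt : Arrow → V) (N : V → Type) : Type :=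
  Σ α : Arrow, N (tgt α) × N (src α)

variable {V Arrow : Type} {src tgt : Arrow → V} {N : V → Type} {𝔽 : Type} [RCLike 𝔽]

/-- `D` is a deformation of `A`: a family of representations, depending on
parameters `λ : ι → 𝔽`, whose matrix entries are analytic (= given by convergent
power series) in a neighbourhood of `0`, with `D 0 = A`. -/
def IsDeformation {ι : Type} [Fintype ι]
    (A : QRep V Arrow src tgt N 𝔽) (D : (ι → 𝔽) → QRep V Arrow src tgt N 𝔽) : Prop :=
  D 0 = A ∧ ∀ α i j, AnalyticAt 𝔽 (fun lam => D lam α i j) (0 : ι → 𝔽)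

/-- Equivalence of deformations: `E` is obtained from `D` by an analytic family
of isomorphisms `I v lam` with `I v 0 = 1`. -/
def DefEquiv [∀ v, Fintype (N v)] [∀ v, DecidableEq (N v)] {ι : Type} [Fintype ι]
    (D E : (ι → 𝔽) → QRep V Arrow src tgt N 𝔽) : Prop :=
  ∃ I : ∀ v : V, (ι → 𝔽) → Matrix (N v) (N v) 𝔽,
    (∀ v, I v 0 = 1) ∧
    (∀ v i j, AnalyticAt 𝔽 (fun lam => I v lam i j) (0 : ι → 𝔽)) ∧
    ∀ α, ∀ᶠ lam in nhds (0 : ι → 𝔽),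
      E lam α = I (tgt α) lam * D lam α * (I (src α) lam)⁻¹

/-- A deformation `D` of `A` is versal if every deformation `B` of `A` is
equivalent to a deformation of the form `D ∘ φ` with `φ` analytic, `φ 0 = 0`. -/
def IsVersal [∀ v, Fintype (N v)] [∀ v, DecidableEq (N v)] {ι : Type} [Fintype ι]
    (A : QRep V Arrow src tgt N 𝔽) (D : (ι → 𝔽) → QRep V Arrow src tgt N 𝔽) : Prop :=
  IsDeformation A D ∧
  ∀ (l : ℕ) (B : (Fin l → 𝔽) → QRep V Arrow src tgt N 𝔽), IsDeformation A B →
    ∃ φ : (Fin l → 𝔽) → ι → 𝔽,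
      φ 0 = 0 ∧ (∀ i : ι, AnalyticAt 𝔽 (fun mu => φ mu i) (0 : Fin l → 𝔽)) ∧
      DefEquiv (fun mu => D (φ mu)) B

/-- A deformation is miniversal if it is versal and no versal deformation has
fewer parameters. -/
def IsMiniversal [∀ v, Fintype (N v)] [∀ v, DecidableEq (N v)] {ι : Type} [Fintype ι]
    (A : QRep V Arrow src tgt N 𝔽) (D : (ι → 𝔽) → QRep V Arrow src tgt N 𝔽) : Prop :=
  IsVersal A D ∧
  ∀ (l : ℕ) (B : (Fin l → 𝔽) → QRep V Arrow src tgt N 𝔽),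
    IsVersal A B → Fintype.card ι ≤ l

/-- The elementary representation `E_{αij}`: all matrices are `0` except the one
assigned to `α`, whose `(i,j)` entry is `1`. -/
def elemRep [DecidableEq Arrow] [∀ v, DecidableEq (N v)]
    (x : QIdx V Arrow src tgt N) : QRep V Arrow src tgt N 𝔽 :=
  fun α i j => if (⟨α, (i, j)⟩ : QIdx V Arrow src tgt N) = x then 1 else 0

/-- The subspace `[𝔽^{n×n}, A]` of representations of the form
`α ↦ C (tgt α) * A α − A α * C (src α)`. -/
def bracketSet [∀ v, Fintype (N v)] (A : QRep V Arrow src tgt N 𝔽) :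
    Set (QRep V Arrow src tgt N 𝔽) :=
  {R | ∃ C : ∀ v : V, Matrix (N v) (N v) 𝔽,
    ∀ α, R α = C (tgt α) * A α - A α * C (src α)}

/-- `E_Γ`: the subspace spanned by the elementary representations `E_{αij}`
with `(α,i,j) ∈ Γ`. -/
def eGamma [DecidableEq Arrow] [∀ v, DecidableEq (N v)]
    (Γ : Finset (QIdx V Arrow src tgt N)) : Set (QRep V Arrow src tgt N 𝔽) :=
  (Submodule.span 𝔽 ((elemRep (𝔽 := 𝔽)) '' (↑Γ : Set (QIdx V Arrow src tgt N))) :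
    Submodule 𝔽 (QRep V Arrow src tgt N 𝔽))

/-- Merging the vertices `p₁` and `p₂` into the single vertex `p₁` (as a vertex of the
quiver with vertex set `{v // v ≠ p₂}`). -/
def mergeVert {V : Type} [DecidableEq V] {p₁ p₂ : V} (hne : p₁ ≠ p₂) :
    V → {v : V // v ≠ p₂} :=
  fun v => if h : v = p₂ then ⟨p₁, hne⟩ else ⟨v, h⟩

theorem mergeVert_dim {V : Type} [DecidableEq V] {p₁ p₂ : V} {n : V → ℕ}
    (hne : p₁ ≠ p₂) (hn : n p₁ = n p₂) (v : V) :
    n (mergeVert hne v).1 = n v := by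
  unfold mergeVert
  split
  · next h => rw [hn, h]
  · rfl


/-!
Any deformation `B` of `A` can be normalized at `α₀`: conjugating by the gauge that is
`(B α₀ J⁻¹)⁻¹` at `p₂` and `1` elsewhere makes the matrix of `α₀` constantly the identity `J`, and a
representation with `J` at `α₀` is the extension of a representation of the merged quiver.
Conversely, a gauge relating two such extensions satisfies `I p₂ J = J I p₁`, so it is the lift of a
gauge of the merged quiver. Hence deformations of `A` and of `A'` correspond, with the same
parameters and up to equivalence, so versality passes in both directions and the minimal numbers of
parameters agree.
-/

section EntrywiseAnalytic

variable {𝕜 E : Type*} [NontriviallyNormedField 𝕜] [NormedAddCommGroup E] [NormedSpace 𝕜 E]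
  {x : E} {l m o : Type*}

def EntrywiseAnalyticAt (𝕜 : Type*) [NontriviallyNormedField 𝕜] [NormedSpace 𝕜 E]
    (M : E → Matrix m o 𝕜) (x : E) : Prop :=
  ∀ i j, AnalyticAt 𝕜 (fun y => M y i j) x

namespace EntrywiseAnalyticAt

theorem const (M : Matrix m o 𝕜) : EntrywiseAnalyticAt 𝕜 (fun _ : E => M) x :=
  fun _ _ => analyticAt_const

theorem submatrix {M : E → Matrix m o 𝕜} (hM : EntrywiseAnalyticAt 𝕜 M x) (e₁ : l → m)
    (e₂ : l → o) : EntrywiseAnalyticAt 𝕜 (fun y => (M y).submatrix e₁ e₂) x :=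
  fun i j => hM (e₁ i) (e₂ j)

theorem mul [Fintype m] {M : E → Matrix l m 𝕜} {N : E → Matrix m o 𝕜}
    (hM : EntrywiseAnalyticAt 𝕜 M x) (hN : EntrywiseAnalyticAt 𝕜 N x) :
    EntrywiseAnalyticAt 𝕜 (fun y => M y * N y) x := by
  intro i j
  simp only [Matrix.mul_apply]
  exact Finset.analyticAt_fun_sum _ fun k _ => (hM i k).mul (hN k j)

variable [Fintype m] [DecidableEq m] {M : E → Matrix m m 𝕜}

theorem det (hM : EntrywiseAnalyticAt 𝕜 M x) : AnalyticAt 𝕜 (fun y => (M y).det) x := by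
  simp only [Matrix.det_apply']
  exact Finset.analyticAt_fun_sum _ fun σ _ =>
    analyticAt_const.mul (Finset.analyticAt_fun_prod _ fun i _ => hM _ _)

theorem adjugate (hM : EntrywiseAnalyticAt 𝕜 M x) :
    EntrywiseAnalyticAt 𝕜 (fun y => (M y).adjugate) x := by
  intro i j
  simp only [Matrix.adjugate_apply]
  refine det fun a b => ?_
  by_cases hab : a = j
  · simpa [Matrix.updateRow_apply, hab] using analyticAt_const
  · simpa [Matrix.updateRow_apply, hab] using hM a b

theorem inv (hM : EntrywiseAnalyticAt 𝕜 M x) (hx : IsUnit (M x).det) :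
    EntrywiseAnalyticAt 𝕜 (fun y => (M y)⁻¹) x := by
  intro i j
  simp only [Matrix.inv_def, Matrix.smul_apply, Ring.inverse_eq_inv', smul_eq_mul]
  exact (hM.det.inv hx.ne_zero).mul (hM.adjugate i j)

theorem eventually_isUnit_det (hM : EntrywiseAnalyticAt 𝕜 M x) (hx : IsUnit (M x).det) :
    ∀ᶠ y in nhds x, IsUnit (M y).det := by
  filter_upwards [hM.det.continuousAt.eventually_ne hx.ne_zero] with y hy
  exact isUnit_iff_ne_zero.2 hy

end EntrywiseAnalyticAt

end EntrywiseAnalytic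

theorem Matrix.entry_congr_of_eq {α W : Type*} {f g : W → ℕ}
    (M : ∀ w, Matrix (Fin (f w)) (Fin (g w)) α) {w w' : W} (hw : w = w') {i : Fin (f w)}
    {j : Fin (g w)} {i' : Fin (f w')} {j' : Fin (g w')}
    (hi : (i : ℕ) = i') (hj : (j : ℕ) = j') : M w i j = M w' i' j' := by
  subst hw
  rw [Fin.ext hi, Fin.ext hj]

section CastIdentity

variable {α : Type*} [NonAssocSemiring α] {a b : ℕ}

/-- The identity matrix between `Fin a` and `Fin b` for `a = b`; the sizes are kept apart because
`n p₁ = n p₂` holds only propositionally. -/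
def castId (α : Type*) [Zero α] [One α] (a b : ℕ) : Matrix (Fin a) (Fin b) α :=
  Matrix.of fun i j => if (i : ℕ) = j then 1 else 0

theorem castId_mul (h : a = b) {m : Type*} (M : Matrix (Fin b) m α) :
    castId α a b * M = M.submatrix (Fin.cast h) id := by
  ext i j
  rw [Matrix.mul_apply, Finset.sum_eq_single (Fin.cast h i)]
  · simp [castId]
  · intro k _ hk
    have : (i : ℕ) ≠ k := fun hik => hk (Fin.ext (by simp [hik]))
    simp [castId, this]
  · simp

theorem mul_castId (h : a = b) {m : Type*} (M : Matrix m (Fin a) α) :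
    M * castId α a b = M.submatrix id (Fin.cast h.symm) := by
  ext i j
  rw [Matrix.mul_apply, Finset.sum_eq_single (Fin.cast h.symm j)]
  · simp [castId]
  · intro k _ hk
    have : (k : ℕ) ≠ j := fun hkj => hk (Fin.ext (by simp [hkj]))
    simp [castId, this]
  · simp

theorem castId_mul_castId (h : a = b) : castId α a b * castId α b a = 1 := by
  rw [castId_mul h]
  ext i j
  simp [castId, Matrix.one_apply, Fin.ext_iff]

theorem mul_castId_eq_castId_mul_iff (h : a = b) {P : Matrix (Fin a) (Fin a) α}
    {Q : Matrix (Fin b) (Fin b) α} :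
    P * castId α a b = castId α a b * Q ↔ P = Q.submatrix (Fin.cast h) (Fin.cast h) := by
  rw [mul_castId h, castId_mul h]
  constructor
  · intro hPQ
    ext i j
    simpa using congr_fun₂ hPQ i (Fin.cast h j)
  · rintro rfl
    ext i j
    simp

end CastIdentity

theorem Matrix.submatrix_mul_mul_inv_equiv {R l m o p : Type*} [CommRing R] [Fintype m]
    [DecidableEq m] [Fintype o] [DecidableEq o] [Fintype l] [DecidableEq l] [Fintype p]
    [DecidableEq p] (P : Matrix m m R) (M : Matrix m o R) (Q : Matrix o o R) (e₁ : l ≃ m)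
    (e₂ : p ≃ o) :
    (P * M * Q⁻¹).submatrix e₁ e₂ =
      P.submatrix e₁ e₁ * M.submatrix e₁ e₂ * (Q.submatrix e₂ e₂)⁻¹ := by
  rw [Matrix.inv_submatrix_equiv, Matrix.submatrix_mul_equiv, Matrix.submatrix_mul_equiv]

theorem IsDeformation.comp {ι κ : Type} [Fintype ι] [Fintype κ] {A : QRep V Arrow src tgt N 𝔽}
    {B : (ι → 𝔽) → QRep V Arrow src tgt N 𝔽} (hB : IsDeformation A B) {φ : (κ → 𝔽) → ι → 𝔽}
    (hφ0 : φ 0 = 0) (hφ : ∀ i, AnalyticAt 𝔽 (fun μ => φ μ i) 0) :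
    IsDeformation A (fun μ => B (φ μ)) := by
  refine ⟨by simp only [hφ0, hB.1], fun α i j => ?_⟩
  have hB' : AnalyticAt 𝔽 (fun lam => B lam α i j) (φ 0) := hφ0 ▸ hB.2 α i j
  exact hB'.comp (AnalyticAt.pi hφ)

section Gauge

variable [∀ v, Fintype (N v)] [∀ v, DecidableEq (N v)]

noncomputable def gaugeAct (g : ∀ v, Matrix (N v) (N v) 𝔽) (R : QRep V Arrow src tgt N 𝔽) :
    QRep V Arrow src tgt N 𝔽 :=
  fun α => g (tgt α) * R α * (g (src α))⁻¹

variable {ι : Type} [Fintype ι]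

theorem DefEquiv.trans {D E F : (ι → 𝔽) → QRep V Arrow src tgt N 𝔽} (hDE : DefEquiv D E)
    (hEF : DefEquiv E F) : DefEquiv D F := by
  obtain ⟨I, hI0, hIa, hI⟩ := hDE
  obtain ⟨J, hJ0, hJa, hJ⟩ := hEF
  refine ⟨fun v μ => J v μ * I v μ, fun v => by simp [hI0, hJ0],
    fun v => EntrywiseAnalyticAt.mul (hJa v) (hIa v), fun α => ?_⟩
  filter_upwards [hI α, hJ α] with μ hIμ hJμ
  rw [hJμ, hIμ, Matrix.mul_inv_rev]
  simp only [Matrix.mul_assoc]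

theorem DefEquiv.symm {D E : (ι → 𝔽) → QRep V Arrow src tgt N 𝔽} (h : DefEquiv D E) :
    DefEquiv E D := by
  obtain ⟨I, hI0, hIa, hI⟩ := h
  have hI0' : ∀ v, IsUnit (I v 0).det := fun v => by simp [hI0]
  refine ⟨fun v μ => (I v μ)⁻¹, fun v => by simp [hI0],
    fun v => EntrywiseAnalyticAt.inv (hIa v) (hI0' v), fun α => ?_⟩
  filter_upwards [hI α, EntrywiseAnalyticAt.eventually_isUnit_det (hIa (tgt α)) (hI0' _),
    EntrywiseAnalyticAt.eventually_isUnit_det (hIa (src α)) (hI0' _)] with μ hIμ ht hs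
  rw [hIμ, Matrix.nonsing_inv_nonsing_inv _ hs, ← Matrix.mul_assoc, ← Matrix.mul_assoc,
    Matrix.nonsing_inv_mul _ ht, Matrix.one_mul, Matrix.nonsing_inv_mul_cancel_right _ _ hs]

end Gauge

section MergedQuiver

variable [DecidableEq V] {n : V → ℕ} {α₀ : Arrow}

abbrev MergedRep (hne : src α₀ ≠ tgt α₀) (n : V → ℕ) (𝔽 : Type) : Type :=
  QRep {v : V // v ≠ tgt α₀} {β : Arrow // β ≠ α₀} (fun β => mergeVert hne (src β.1))
    (fun β => mergeVert hne (tgt β.1)) (fun v' => Fin (n v'.1)) 𝔽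

variable (α₀) in
noncomputable def normGauge (R : QRep V Arrow src tgt (fun v => Fin (n v)) 𝔽) :
    ∀ v, Matrix (Fin (n v)) (Fin (n v)) 𝔽 :=
  Function.update 1 (tgt α₀) (R α₀ * castId 𝔽 (n (src α₀)) (n (tgt α₀)))⁻¹

theorem normGauge_of_apply_eq_castId (hn : n (src α₀) = n (tgt α₀))
    {R : QRep V Arrow src tgt (fun v => Fin (n v)) 𝔽} (hR : R α₀ = castId 𝔽 _ _) :
    normGauge α₀ R = 1 := by
  rw [normGauge, hR, castId_mul_castId hn.symm, inv_one, Function.update_eq_self_iff, Pi.one_apply]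

theorem gaugeAct_normGauge_apply_self (hne : src α₀ ≠ tgt α₀) (hn : n (src α₀) = n (tgt α₀))
    {R : QRep V Arrow src tgt (fun v => Fin (n v)) 𝔽}
    (hS : IsUnit (R α₀ * castId 𝔽 (n (src α₀)) (n (tgt α₀))).det) :
    gaugeAct (normGauge α₀ R) R α₀ = castId 𝔽 _ _ := by
  rw [gaugeAct, normGauge, Function.update_self, Function.update_of_ne hne, Pi.one_apply, inv_one,
    Matrix.mul_one]
  set S := R α₀ * castId 𝔽 (n (src α₀)) (n (tgt α₀))
  calc S⁻¹ * R α₀ = S⁻¹ * (S * castId 𝔽 (n (tgt α₀)) (n (src α₀))) := by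
        rw [Matrix.mul_assoc, castId_mul_castId hn, Matrix.mul_one]
    _ = castId 𝔽 _ _ := Matrix.nonsing_inv_mul_cancel_left _ _ hS

variable (hne : src α₀ ≠ tgt α₀) (hn : n (src α₀) = n (tgt α₀))

def mergeEquiv (v : V) : Fin (n (mergeVert hne v).1) ≃ Fin (n v) :=
  finCongr (mergeVert_dim hne hn v)

def restrictRep (R : QRep V Arrow src tgt (fun v => Fin (n v)) 𝔽) : MergedRep hne n 𝔽 :=
  fun β => (R β.1).submatrix (mergeEquiv hne hn (tgt β.1)) (mergeEquiv hne hn (src β.1))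

def liftGauge (g : ∀ v' : {v : V // v ≠ tgt α₀}, Matrix (Fin (n v'.1)) (Fin (n v'.1)) 𝔽) :
    ∀ v, Matrix (Fin (n v)) (Fin (n v)) 𝔽 :=
  fun v => (g (mergeVert hne v)).submatrix (mergeEquiv hne hn v).symm (mergeEquiv hne hn v).symm

theorem mergeVert_tgt : mergeVert hne (tgt α₀) = ⟨src α₀, hne⟩ := dif_pos rfl

theorem mergeVert_of_ne {v : V} (hv : v ≠ tgt α₀) : mergeVert hne v = ⟨v, hv⟩ := dif_neg hv

variable {hne hn}

theorem restrictRep_gaugeAct_liftGauge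
    (g : ∀ v' : {v : V // v ≠ tgt α₀}, Matrix (Fin (n v'.1)) (Fin (n v'.1)) 𝔽)
    (R : QRep V Arrow src tgt (fun v => Fin (n v)) 𝔽) :
    restrictRep hne hn (gaugeAct (liftGauge hne hn g) R) = gaugeAct g (restrictRep hne hn R) := by
  funext β
  simp only [restrictRep, gaugeAct, liftGauge]
  rw [Matrix.submatrix_mul_mul_inv_equiv]
  simp

omit [RCLike 𝔽] in
theorem liftGauge_tgt
    (g : ∀ v' : {v : V // v ≠ tgt α₀}, Matrix (Fin (n v'.1)) (Fin (n v'.1)) 𝔽) :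
    liftGauge hne hn g (tgt α₀) =
      (liftGauge hne hn g (src α₀)).submatrix (Fin.cast hn.symm) (Fin.cast hn.symm) := by
  ext i j
  simp only [liftGauge, Matrix.submatrix_apply]
  exact Matrix.entry_congr_of_eq g ((mergeVert_tgt hne).trans (mergeVert_of_ne hne hne).symm)
    (by simp [mergeEquiv]) (by simp [mergeEquiv])

theorem liftGauge_restrict {g : ∀ v, Matrix (Fin (n v)) (Fin (n v)) 𝔽}
    (hg : g (tgt α₀) * castId 𝔽 (n (tgt α₀)) (n (src α₀)) = castId 𝔽 _ _ * g (src α₀)) :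
    liftGauge hne hn (fun v' => g v'.1) = g := by
  funext v
  ext i j
  simp only [liftGauge, Matrix.submatrix_apply]
  by_cases hv : v = tgt α₀
  · subst hv
    rw [(mul_castId_eq_castId_mul_iff hn.symm).1 hg]
    exact Matrix.entry_congr_of_eq g (congrArg Subtype.val (mergeVert_tgt hne))
      (by simp [mergeEquiv]) (by simp [mergeEquiv])
  · exact Matrix.entry_congr_of_eq g (congrArg Subtype.val (mergeVert_of_ne hne hv))
      (by simp [mergeEquiv]) (by simp [mergeEquiv])

variable (hne hn) in
noncomputable def normalizeRep (R : QRep V Arrow src tgt (fun v => Fin (n v)) 𝔽) :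
    MergedRep hne n 𝔽 :=
  restrictRep hne hn (gaugeAct (normGauge α₀ R) R)

variable [DecidableEq Arrow]

variable (hne hn) in
def extendRep (R' : MergedRep hne n 𝔽) : QRep V Arrow src tgt (fun v => Fin (n v)) 𝔽 :=
  fun β => Matrix.of fun i j =>
    if h : β = α₀ then castId 𝔽 _ _ i j
    else R' ⟨β, h⟩ ((mergeEquiv hne hn (tgt β)).symm i) ((mergeEquiv hne hn (src β)).symm j)

theorem extendRep_apply_self (R' : MergedRep hne n 𝔽) :
    extendRep hne hn R' α₀ = castId 𝔽 _ _ := by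
  ext i j
  simp [extendRep]

theorem extendRep_apply_of_ne (R' : MergedRep hne n 𝔽) {β : Arrow} (hβ : β ≠ α₀) :
    extendRep hne hn R' β =
      (R' ⟨β, hβ⟩).submatrix (mergeEquiv hne hn (tgt β)).symm (mergeEquiv hne hn (src β)).symm := by
  ext i j
  simp [extendRep, hβ]

theorem restrictRep_extendRep (R' : MergedRep hne n 𝔽) :
    restrictRep hne hn (extendRep hne hn R') = R' := by
  funext β
  simp [restrictRep, extendRep_apply_of_ne _ β.2]

theorem extendRep_restrictRep {R : QRep V Arrow src tgt (fun v => Fin (n v)) 𝔽}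
    (hR : R α₀ = castId 𝔽 _ _) : extendRep hne hn (restrictRep hne hn R) = R := by
  funext β
  by_cases hβ : β = α₀
  · subst hβ
    rw [extendRep_apply_self, hR]
  · simp [extendRep_apply_of_ne _ hβ, restrictRep]

theorem gaugeAct_liftGauge_extendRep_apply_self
    (g : ∀ v' : {v : V // v ≠ tgt α₀}, Matrix (Fin (n v'.1)) (Fin (n v'.1)) 𝔽)
    (R' : MergedRep hne n 𝔽) (hg : IsUnit (liftGauge hne hn g (src α₀)).det) :
    gaugeAct (liftGauge hne hn g) (extendRep hne hn R') α₀ = castId 𝔽 _ _ := by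
  have hcomm := (mul_castId_eq_castId_mul_iff hn.symm).2 (liftGauge_tgt (hne := hne) (hn := hn) g)
  rw [gaugeAct, extendRep_apply_self, hcomm, Matrix.mul_nonsing_inv_cancel_right _ _ hg]

theorem extendRep_normalizeRep {R : QRep V Arrow src tgt (fun v => Fin (n v)) 𝔽}
    (hS : IsUnit (R α₀ * castId 𝔽 (n (src α₀)) (n (tgt α₀))).det) :
    extendRep hne hn (normalizeRep hne hn R) = gaugeAct (normGauge α₀ R) R :=
  extendRep_restrictRep (gaugeAct_normGauge_apply_self hne hn hS)

end MergedQuiver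

section MergedDeformations

variable [DecidableEq V] {n : V → ℕ} {α₀ : Arrow}
  {hne : src α₀ ≠ tgt α₀} {hn : n (src α₀) = n (tgt α₀)} {ι : Type} [Fintype ι]
  {A : QRep V Arrow src tgt (fun v => Fin (n v)) 𝔽}

theorem IsDeformation.normGauge_analyticAt
    {B : (ι → 𝔽) → QRep V Arrow src tgt (fun v => Fin (n v)) 𝔽} (hB : IsDeformation A B)
    (hA : A α₀ = castId 𝔽 _ _) (hn : n (src α₀) = n (tgt α₀)) (v : V) :
    EntrywiseAnalyticAt 𝔽 (fun μ => normGauge α₀ (B μ) v) 0 := by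
  by_cases hv : v = tgt α₀
  · subst hv
    simp only [normGauge, Function.update_self]
    refine EntrywiseAnalyticAt.inv (EntrywiseAnalyticAt.mul (hB.2 α₀) (.const _)) ?_
    simp [hB.1, hA, castId_mul_castId hn.symm]
  · simp only [normGauge, Function.update_of_ne hv, Pi.one_apply]
    exact .const 1

theorem IsDeformation.restrictRep_normalizeRep
    {B : (ι → 𝔽) → QRep V Arrow src tgt (fun v => Fin (n v)) 𝔽} (hB : IsDeformation A B)
    (hA : A α₀ = castId 𝔽 _ _) :
    IsDeformation (restrictRep hne hn A) (fun μ => normalizeRep hne hn (B μ)) := by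
  have hg0 : normGauge α₀ (B 0) = 1 := by rw [hB.1, normGauge_of_apply_eq_castId hn hA]
  have hg := hB.normGauge_analyticAt hA hn
  refine ⟨?_, fun β i j => ?_⟩
  · simp only [normalizeRep, hB.1, normGauge_of_apply_eq_castId hn hA]
    congr
    funext α
    simp [gaugeAct]
  · refine ((EntrywiseAnalyticAt.mul (hg _) (hB.2 β.1)).mul
      (EntrywiseAnalyticAt.inv (hg _) ?_)) _ _
    simp [hg0]

variable [DecidableEq Arrow]

theorem IsDeformation.defEquiv_extendRep_normalizeRep
    {B : (ι → 𝔽) → QRep V Arrow src tgt (fun v => Fin (n v)) 𝔽} (hB : IsDeformation A B)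
    (hA : A α₀ = castId 𝔽 _ _) :
    DefEquiv B (fun μ => extendRep hne hn (normalizeRep hne hn (B μ))) := by
  refine ⟨fun v μ => normGauge α₀ (B μ) v,
    fun v => by simp only [hB.1, normGauge_of_apply_eq_castId hn hA, Pi.one_apply],
    hB.normGauge_analyticAt hA hn, fun β => ?_⟩
  have hS : EntrywiseAnalyticAt 𝔽 (fun μ => B μ α₀ * castId 𝔽 (n (src α₀)) (n (tgt α₀))) 0 :=
    EntrywiseAnalyticAt.mul (hB.2 α₀) (.const _)
  filter_upwards [hS.eventually_isUnit_det (by simp [hB.1, hA, castId_mul_castId hn.symm])]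
    with μ hμ
  rw [extendRep_normalizeRep hμ]
  rfl

theorem IsDeformation.extendRep {C' : (ι → 𝔽) → MergedRep hne n 𝔽}
    (hC' : IsDeformation (restrictRep hne hn A) C') (hA : A α₀ = castId 𝔽 _ _) :
    IsDeformation A (fun μ => extendRep hne hn (C' μ)) := by
  refine ⟨by simp only [hC'.1, extendRep_restrictRep hA], fun β => ?_⟩
  by_cases hβ : β = α₀
  · subst hβ
    simp only [extendRep_apply_self]
    exact EntrywiseAnalyticAt.const _
  · simp only [extendRep_apply_of_ne _ hβ]
    exact fun i j => hC'.2 ⟨β, hβ⟩ _ _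

theorem DefEquiv.map_extendRep {X Y : (ι → 𝔽) → MergedRep hne n 𝔽} (h : DefEquiv X Y) :
    DefEquiv (fun μ => extendRep hne hn (X μ)) (fun μ => extendRep hne hn (Y μ)) := by
  obtain ⟨g, hg0, hga, hg⟩ := h
  have hlift0 : liftGauge hne hn (fun v' => g v' 0) = 1 := by
    funext v
    simp [liftGauge, hg0]
  have hlifta : ∀ v, EntrywiseAnalyticAt 𝔽 (fun μ => liftGauge hne hn (fun v' => g v' μ) v) 0 :=
    fun v => EntrywiseAnalyticAt.submatrix (hga _) _ _
  refine ⟨fun v μ => liftGauge hne hn (fun v' => g v' μ) v, fun v => congrFun hlift0 v,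
    hlifta, fun β => ?_⟩
  by_cases hβ : β = α₀
  · subst hβ
    filter_upwards [(hlifta (src β)).eventually_isUnit_det (by simp [hlift0])] with μ hμ
    rw [extendRep_apply_self]
    exact (gaugeAct_liftGauge_extendRep_apply_self _ _ hμ).symm
  · filter_upwards [hg ⟨β, hβ⟩] with μ hμ
    rw [extendRep_apply_of_ne _ hβ, extendRep_apply_of_ne _ hβ, hμ,
      Matrix.submatrix_mul_mul_inv_equiv]
    rfl

theorem DefEquiv.of_map_extendRep {X Y : (ι → 𝔽) → MergedRep hne n 𝔽}
    (h : DefEquiv (fun μ => extendRep hne hn (X μ)) (fun μ => extendRep hne hn (Y μ))) :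
    DefEquiv X Y := by
  obtain ⟨g, hg0, hga, hg⟩ := h
  refine ⟨fun v' μ => g v'.1 μ, fun v' => hg0 v'.1, fun v' => hga v'.1, fun β => ?_⟩
  filter_upwards [hg α₀, hg β.1,
    EntrywiseAnalyticAt.eventually_isUnit_det (hga (src α₀)) (by simp [hg0])] with μ h₀ hβ hs
  rw [extendRep_apply_self, extendRep_apply_self] at h₀
  have hcomm : g (tgt α₀) μ * castId 𝔽 (n (tgt α₀)) (n (src α₀)) =
      castId 𝔽 (n (tgt α₀)) (n (src α₀)) * g (src α₀) μ := by
    nth_rewrite 2 [h₀]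
    rw [Matrix.nonsing_inv_mul_cancel_right _ _ hs]
  calc Y μ β = restrictRep hne hn (extendRep hne hn (Y μ)) β := by rw [restrictRep_extendRep]
    _ = restrictRep hne hn (gaugeAct (fun v => g v μ) (extendRep hne hn (X μ))) β := by
      simp only [restrictRep]
      rw [hβ]
      rfl
    _ = gaugeAct (fun v' => g v'.1 μ) (X μ) β := by
      rw [← liftGauge_restrict (hne := hne) (hn := hn) (g := fun v => g v μ) hcomm,
        restrictRep_gaugeAct_liftGauge, restrictRep_extendRep]

theorem IsVersal.extendRep {k : ℕ} {D' : (Fin k → 𝔽) → MergedRep hne n 𝔽}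
    (hD' : IsVersal (restrictRep hne hn A) D') (hA : A α₀ = castId 𝔽 _ _) :
    IsVersal A (fun μ => extendRep hne hn (D' μ)) := by
  refine ⟨hD'.1.extendRep hA, fun l B hB => ?_⟩
  obtain ⟨φ, hφ0, hφ, hequiv⟩ := hD'.2 l _ (hB.restrictRep_normalizeRep hA)
  exact ⟨φ, hφ0, hφ, hequiv.map_extendRep.trans (hB.defEquiv_extendRep_normalizeRep hA).symm⟩

theorem IsVersal.restrictRep_normalizeRep
    {B : (ι → 𝔽) → QRep V Arrow src tgt (fun v => Fin (n v)) 𝔽} (hB : IsVersal A B)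
    (hA : A α₀ = castId 𝔽 _ _) :
    IsVersal (restrictRep hne hn A) (fun μ => normalizeRep hne hn (B μ)) := by
  refine ⟨hB.1.restrictRep_normalizeRep hA, fun l C' hC' => ?_⟩
  obtain ⟨φ, hφ0, hφ, hequiv⟩ := hB.2 l _ (hC'.extendRep hA)
  have hBφ : IsDeformation A (fun μ => B (φ μ)) := hB.1.comp hφ0 hφ
  exact ⟨φ, hφ0, hφ, ((hBφ.defEquiv_extendRep_normalizeRep hA).symm.trans hequiv).of_map_extendRep⟩

end MergedDeformations

/-- **Lemma 5.** Let `A` be a representation of a quiver `Q` such that `A α₀` is an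
identity matrix for some arrow `α₀ : p₁ → p₂` with `p₁ ≠ p₂`. Let `Q'` be the quiver
obtained from `Q` by removing `α₀` and merging `p₁` and `p₂` into a single vertex, and
let `A'` be the representation of `Q'` obtained from `A` by removing `A α₀`. Then every
miniversal deformation of `A'` extends, by assigning the identity matrix to `α₀`, to a
miniversal deformation of `A`. -/
theorem miniversal_of_merged_quiver
    {V Arrow : Type} [DecidableEq V] [DecidableEq Arrow]
    {src tgt : Arrow → V} {n : V → ℕ} {𝔽 : Type} [RCLike 𝔽]
    (A : QRep V Arrow src tgt (fun v => Fin (n v)) 𝔽)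
    (α₀ : Arrow) (p₁ p₂ : V)
    (hsrc : src α₀ = p₁) (htgt : tgt α₀ = p₂) (hne : p₁ ≠ p₂)
    (hn : n p₁ = n p₂)
    -- `A α₀` is the identity matrix
    (hA₀ : ∀ i j, A α₀ i j = if (i : ℕ) = (j : ℕ) then (1 : 𝔽) else 0)
    -- the representation `A'` of the merged quiver `Q'` obtained by removing `A α₀`
    (A' : QRep {v : V // v ≠ p₂} {β : Arrow // β ≠ α₀}
      (fun β => mergeVert hne (src β.1)) (fun β => mergeVert hne (tgt β.1))
      (fun v' => Fin (n v'.1)) 𝔽)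
    (hA' : A' = fun β : {β : Arrow // β ≠ α₀} => (A β.1).submatrix
      (Fin.cast (mergeVert_dim hne hn (tgt β.1)))
      (Fin.cast (mergeVert_dim hne hn (src β.1))))
    -- a miniversal deformation of `A'`
    {k : ℕ}
    (D' : (Fin k → 𝔽) → QRep {v : V // v ≠ p₂} {β : Arrow // β ≠ α₀}
      (fun β => mergeVert hne (src β.1)) (fun β => mergeVert hne (tgt β.1))
      (fun v' => Fin (n v'.1)) 𝔽)
    (hD' : IsMiniversal A' D')
    -- its extension to `Q`, assigning the identity matrix to `α₀`
    (D : (Fin k → 𝔽) → QRep V Arrow src tgt (fun v => Fin (n v)) 𝔽)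
    (hD : D = fun (lam : Fin k → 𝔽) (β : Arrow) => Matrix.of fun (i : Fin (n (tgt β))) (j : Fin (n (src β))) =>
      if h : β = α₀ then (if (i : ℕ) = (j : ℕ) then (1 : 𝔽) else 0)
      else D' lam ⟨β, h⟩
        (Fin.cast (mergeVert_dim hne hn (tgt β)).symm i)
        (Fin.cast (mergeVert_dim hne hn (src β)).symm j)) :
    IsMiniversal A D := by
  subst hsrc htgt hA' hD
  have hA : A α₀ = castId 𝔽 _ _ := Matrix.ext hA₀
  exact ⟨IsVersal.extendRep (hn := hn) (A := A) hD'.1 hA,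
    fun l B hB => hD'.2 l _ (hB.restrictRep_normalizeRep (hne := hne) (hn := hn) hA)⟩
end

section
/- Let Q be the quiver 1 — 2 — ⋯ — t with an arbitrary orientation of its arrows, over 𝔽 (ℝ or ℂ), and let p ≤ q < s. Then the one-parameter deformation A(λ) of A = L_{pq} ⊕ L_{q+1,s} obtained from A by replacing the zero 1×1 matrix assigned to the arrow connecting q and q+1 by the 1×1 matrix [λ] (all other matrices of A unchanged) is a miniversal deformation of A. -/
open Matrix Filter Pointwise

variable {V Arrow : Type} {src tgt : Arrow → V} {N : V → Type} {𝔽 : Type} [RCLike 𝔽]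

section Chain

variable {t : ℕ}

/-- The endpoint `i` of the arrow `α_i` of the chain quiver `1 — 2 — ⋯ — t`
(vertices are numbered `0, …, t-1` here). -/
def chainLow (i : Fin (t - 1)) : Fin t := ⟨i.1, by have := i.isLt; omega⟩

/-- The endpoint `i+1` of the arrow `α_i` of the chain quiver. -/
def chainHigh (i : Fin (t - 1)) : Fin t := ⟨i.1 + 1, by have := i.isLt; omega⟩

/-- The source of the arrow `α_i`, for the orientation `o` (`o i = true` means
`α_i : i → i+1`, and `o i = false` means `α_i : i+1 → i`). -/
def chainSrc (o : Fin (t - 1) → Bool) (i : Fin (t - 1)) : Fin t :=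
  if o i then chainLow i else chainHigh i

/-- The target of the arrow `α_i`, for the orientation `o`. -/
def chainTgt (o : Fin (t - 1) → Bool) (i : Fin (t - 1)) : Fin t :=
  if o i then chainHigh i else chainLow i

/-- The dimension vector of the indecomposable representation `L_{ab}`:
`1` at the vertices `a, …, b` and `0` elsewhere. -/
def Ldim (a b : ℕ) (v : Fin t) : ℕ := if a ≤ v.1 ∧ v.1 ≤ b then 1 else 0

/-- The indecomposable representation `L_{ab}` of the chain quiver: the `1×1` identity
matrix on every arrow joining two vertices of `{a, …, b}`, and zero matrices (with `0`
rows and/or `0` columns, hence with no entries at all) on all other arrows. -/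
def Lrep (a b : ℕ) (o : Fin (t - 1) → Bool) (𝔽 : Type) [RCLike 𝔽] :
    QRep (Fin t) (Fin (t - 1)) (chainSrc o) (chainTgt o) (fun v => Fin (Ldim a b v)) 𝔽 :=
  fun _ => Matrix.of fun _ _ => 1

end Chain

/-!
Every vertex of `A = L_{pq} ⊕ L_{q+1,s}` carries a space of dimension at most one, so a
deformation `B(μ)` of `A` amounts to one analytic scalar `b_β(μ)` per arrow of the support, with
`b_β(0) = 1` except on the arrow `q` joining the two summands, where `b_q(0) = 0`. As the chain is
a tree, analytic vertex rescalings `c_v(μ)` with `c_v(0) = 1` and `c_{q+1} = c_q` turn every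
`b_β` with `β ≠ q` into `1` and leave `b_q` alone, so `B(μ)` is equivalent to `A(b_q(μ))`.
Minimality: conjugation keeps the zero matrix of `A` on the arrow `q` zero, while `A(λ)` carries
`λ` there, so `A` has no versal deformation without parameters.
-/

open Topology

theorem Matrix.inv_smul_one {n : Type} [Fintype n] [DecidableEq n] (c : 𝔽) :
    (c • (1 : Matrix n n 𝔽))⁻¹ = c⁻¹ • 1 := by
  rcases eq_or_ne c 0 with rfl | hc
  · simp
  · have : Invertible c := invertibleOfNonzero hc
    rw [Matrix.inv_smul (A := 1) c (by simp), inv_one, invOf_eq_inv]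

theorem not_eventually_apply_eq_zero {ι : Type} [Fintype ι] (i : ι) :
    ¬ ∀ᶠ x in 𝓝 (0 : ι → 𝔽), x i = 0 := by
  intro h
  have hconst : Tendsto (fun y : 𝔽 => fun _ : ι => y) (𝓝[≠] 0) (𝓝 0) :=
    ((continuous_pi fun _ => continuous_id).tendsto' 0 0 rfl).mono_left nhdsWithin_le_nhds
  obtain ⟨y, hy, hy0⟩ := ((hconst.eventually h).and self_mem_nhdsWithin).exists
  exact hy0 hy

theorem isDeformation_add_single [DecidableEq Arrow] {A : QRep V Arrow src tgt N 𝔽} {e : Arrow}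
    {D : (Fin 1 → 𝔽) → QRep V Arrow src tgt N 𝔽}
    (hD : ∀ lam β i j, D lam β i j = A β i j + if β = e then lam 0 else 0) :
    IsDeformation A D := by
  refine ⟨funext fun β => Matrix.ext fun i j => by simp [hD], fun β i j => ?_⟩
  simp only [hD]
  refine analyticAt_const.add ?_
  split_ifs
  · exact analyticAt_pi_iff.1 analyticAt_id 0
  · exact analyticAt_const

section Gauge

variable [∀ v, Fintype (N v)] [∀ v, DecidableEq (N v)]

theorem defEquiv_of_scalar_gauge {ι : Type} [Fintype ι] {D E : (ι → 𝔽) → QRep V Arrow src tgt N 𝔽}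
    (c : V → (ι → 𝔽) → 𝔽) (hc0 : ∀ v, c v 0 = 1) (hc : ∀ v, AnalyticAt 𝔽 (c v) 0)
    (hE : ∀ α, ∀ᶠ lam in 𝓝 0, E lam α = (c (tgt α) lam * (c (src α) lam)⁻¹) • D lam α) :
    DefEquiv D E := by
  refine ⟨fun v lam => c v lam • 1, fun v => by simp [hc0], fun v i j => ?_, fun α => ?_⟩
  · simp only [Matrix.smul_apply, smul_eq_mul]
    exact (hc v).mul analyticAt_const
  · filter_upwards [hE α] with lam h
    rw [h, Matrix.inv_smul_one, Matrix.smul_mul, Matrix.one_mul, Matrix.mul_smul, Matrix.mul_one,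
      smul_smul, mul_comm]

theorem not_defEquiv_const_of_add_single [DecidableEq Arrow] {A : QRep V Arrow src tgt N 𝔽}
    {e : Arrow} {D : (Fin 1 → 𝔽) → QRep V Arrow src tgt N 𝔽} (hAe : A e = 0)
    (i : N (tgt e)) (j : N (src e))
    (hD : ∀ lam β i j, D lam β i j = A β i j + if β = e then lam 0 else 0) :
    ¬ DefEquiv (fun _ => A) D := by
  rintro ⟨I, -, -, hI⟩
  refine not_eventually_apply_eq_zero 0 ((hI e).mono fun lam h => ?_)
  simpa [hD, hAe] using congrFun (congrFun h i) j

theorem one_le_of_isVersal {A : QRep V Arrow src tgt N 𝔽} {l k : ℕ}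
    {B : (Fin l → 𝔽) → QRep V Arrow src tgt N 𝔽} (hB : IsVersal A B)
    {E : (Fin k → 𝔽) → QRep V Arrow src tgt N 𝔽} (hE : IsDeformation A E)
    (hne : ¬ DefEquiv (fun _ => A) E) : 1 ≤ l := by
  by_contra! hl
  obtain rfl : l = 0 := by omega
  obtain ⟨φ, -, -, hφ⟩ := hB.2 k E hE
  have hconst : (fun mu => B (φ mu)) = fun _ => A :=
    funext fun mu => by rw [Subsingleton.elim (φ mu) 0, hB.1.1]
  exact hne (hconst ▸ hφ)

end Gauge

section Chain

variable {t : ℕ}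

theorem chainSrc_chainTgt_val (o : Fin (t - 1) → Bool) (β : Fin (t - 1)) :
    ((chainSrc o β).1 = β.1 ∧ (chainTgt o β).1 = β.1 + 1) ∨
      ((chainSrc o β).1 = β.1 + 1 ∧ (chainTgt o β).1 = β.1) := by
  cases h : o β <;> simp [chainSrc, chainTgt, chainLow, chainHigh, h]

theorem exists_chain_gauge (o : Fin (t - 1) → Bool) {ι : Type} [Fintype ι]
    (w : Fin (t - 1) → (ι → 𝔽) → 𝔽) (hw0 : ∀ β, w β 0 = 1) (hw : ∀ β, AnalyticAt 𝔽 (w β) 0) :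
    ∃ c : Fin t → (ι → 𝔽) → 𝔽, (∀ v, c v 0 = 1) ∧ (∀ v, AnalyticAt 𝔽 (c v) 0) ∧
      ∀ β, ∀ᶠ lam in 𝓝 0, c (chainTgt o β) lam * (c (chainSrc o β) lam)⁻¹ = w β lam := by
  set step : Fin (t - 1) → (ι → 𝔽) → 𝔽 := fun β lam => if o β then w β lam else (w β lam)⁻¹
  have hstep0 : ∀ β, step β 0 = 1 := fun β => by simp [step, hw0]
  have hstep : ∀ β, AnalyticAt 𝔽 (step β) 0 := fun β => by
    by_cases ho : o β
    · simpa [step, ho] using hw β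
    · simp only [step, ho, Bool.false_eq_true, if_false]
      exact (hw β).inv (by simp [hw0])
  set c : Fin t → (ι → 𝔽) → 𝔽 := fun v lam => ∏ γ with γ.1 < v.1, step γ lam
  have hc0 : ∀ v, c v 0 = 1 := fun v => Finset.prod_eq_one fun γ _ => hstep0 γ
  have hc : ∀ v, AnalyticAt 𝔽 (c v) 0 := fun v =>
    Finset.analyticAt_fun_prod _ fun γ _ => hstep γ
  have hsucc : ∀ β lam, c (chainHigh β) lam = c (chainLow β) lam * step β lam := by
    intro β lam
    have : (Finset.univ.filter fun γ : Fin (t - 1) => γ.1 < β.1 + 1) =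
        insert β (Finset.univ.filter fun γ : Fin (t - 1) => γ.1 < β.1) := by
      ext γ; simp [Fin.ext_iff]; omega
    simp only [c, chainHigh, chainLow, this]
    rw [Finset.prod_insert (by simp), mul_comm]
  refine ⟨c, hc0, hc, fun β => ?_⟩
  have hlow : c (chainLow β) 0 ≠ 0 := by rw [hc0]; exact one_ne_zero
  filter_upwards [(hc (chainLow β)).continuousAt.eventually_ne hlow] with lam hne
  cases ho : o β <;> simp [chainSrc, chainTgt, ho, hsucc, step] <;> field_simp

theorem isVersal_of_thin_chain {o : Fin (t - 1) → Bool} {N : Fin t → Type}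
    [∀ v, Fintype (N v)] [∀ v, DecidableEq (N v)] [∀ v, Subsingleton (N v)]
    {A : QRep (Fin t) (Fin (t - 1)) (chainSrc o) (chainTgt o) N 𝔽} {e : Fin (t - 1)}
    {D : (Fin 1 → 𝔽) → QRep (Fin t) (Fin (t - 1)) (chainSrc o) (chainTgt o) N 𝔽}
    (hA : ∀ β i j, β ≠ e → A β i j = 1)
    (hD : ∀ lam β i j, D lam β i j = A β i j + if β = e then lam 0 else 0) :
    IsVersal A D := by
  refine ⟨isDeformation_add_single hD, fun l B ⟨hB0, hB⟩ => ?_⟩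
  set b : Fin (t - 1) → (Fin l → 𝔽) → 𝔽 := fun β μ => ∑ i, ∑ j, B μ β i j
  have hb : ∀ μ β i j, B μ β i j = b β μ := fun μ β i j => by
    simp only [b, Fintype.sum_subsingleton _ i, Fintype.sum_subsingleton _ j]
  have hb0 : ∀ β i j, b β 0 = A β i j := fun β i j => by rw [← hb, hB0]
  have hban : ∀ β, AnalyticAt 𝔽 (b β) 0 := fun β =>
    Finset.analyticAt_fun_sum _ fun i _ => Finset.analyticAt_fun_sum _ fun j _ => hB β i j
  -- shifted so that `w β 0 = 1` also on arrows whose matrices are empty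
  set w : Fin (t - 1) → (Fin l → 𝔽) → 𝔽 := fun β μ => if β = e then 1 else b β μ - b β 0 + 1
  have hw0 : ∀ β, w β 0 = 1 := fun β => by simp [w]
  have hw : ∀ β, AnalyticAt 𝔽 (w β) 0 := fun β => by
    by_cases hβ : β = e
    · simp only [w, hβ, if_true]; exact analyticAt_const
    · simp only [w, hβ, if_false]; exact ((hban β).sub analyticAt_const).add analyticAt_const
  obtain ⟨c, hc0, hc, hcw⟩ := exists_chain_gauge o w hw0 hw
  refine ⟨fun μ _ => b e μ - b e 0, funext fun _ => sub_self _,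
    fun _ => (hban e).sub analyticAt_const, defEquiv_of_scalar_gauge c hc0 hc fun β => ?_⟩
  filter_upwards [hcw β] with μ hμ
  ext i j
  rw [hμ, Matrix.smul_apply, smul_eq_mul, hD, hb]
  by_cases hβ : β = e
  · subst hβ; simp [w, hb0 β i j]
  · simp [w, hβ, hb0 β i j, hA β i j hβ]

theorem Ldim_bounds {a b : ℕ} {v : Fin t} (i : Fin (Ldim a b v)) : a ≤ v.1 ∧ v.1 ≤ b := by
  have hi := i.isLt
  unfold Ldim at hi
  split_ifs at hi with h
  · exact h
  · omega

theorem Ldim_le_one (a b : ℕ) (v : Fin t) : Ldim a b v ≤ 1 := by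
  unfold Ldim; split_ifs <;> omega

instance {a b d : ℕ} (v : Fin t) : Subsingleton (Fin (Ldim a b v) ⊕ Fin (Ldim (b + 1) d v)) := by
  constructor
  rintro (i | i) (j | j)
  · exact congrArg Sum.inl (Fin.ext (by have := Ldim_le_one a b v; omega))
  · have := Ldim_bounds i; have := Ldim_bounds j; omega
  · have := Ldim_bounds i; have := Ldim_bounds j; omega
  · exact congrArg Sum.inr (Fin.ext (by have := Ldim_le_one (b + 1) d v; omega))

theorem nonempty_Ldim_sum {a b d : ℕ} {v : Fin t} (ha : a ≤ v.1) (hd : v.1 ≤ d) :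
    Nonempty (Fin (Ldim a b v) ⊕ Fin (Ldim (b + 1) d v)) := by
  by_cases hb : v.1 ≤ b
  · exact ⟨.inl ⟨0, by simp [Ldim, ha, hb]⟩⟩
  · exact ⟨.inr ⟨0, by unfold Ldim; rw [if_pos ⟨by omega, hd⟩]; exact one_pos⟩⟩

theorem fromBlocks_Lrep_apply (o : Fin (t - 1) → Bool) (p q s : ℕ) (β : Fin (t - 1))
    (i : Fin (Ldim p q (chainTgt o β)) ⊕ Fin (Ldim (q + 1) s (chainTgt o β)))
    (j : Fin (Ldim p q (chainSrc o β)) ⊕ Fin (Ldim (q + 1) s (chainSrc o β))) :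
    Matrix.fromBlocks (Lrep p q o 𝔽 β) 0 0 (Lrep (q + 1) s o 𝔽 β) i j =
      if β.1 = q then 0 else 1 := by
  have hβ := chainSrc_chainTgt_val o β
  rcases i with i | i <;> rcases j with j | j <;> have hi := Ldim_bounds i <;>
    have hj := Ldim_bounds j <;> simp only [fromBlocks_apply₁₁, fromBlocks_apply₁₂,
      fromBlocks_apply₂₁, fromBlocks_apply₂₂, Lrep, of_apply, Matrix.zero_apply] <;>
    split_ifs <;> first | rfl | (exfalso; omega)

end Chain

/-- **Theorem 6(i).** For the chain quiver `1 — 2 — ⋯ — t` (vertices numbered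
`0, …, t-1`) with an arbitrary orientation `o`, over `𝔽 = ℝ` or `ℂ`, and `p ≤ q < s`
(`s < t`), the one-parameter deformation of `A = L_{pq} ⊕ L_{q+1,s}` obtained by
replacing the zero `1×1` matrix assigned to the arrow joining `q` and `q+1` by `[λ]`
(all other matrices unchanged) is a miniversal deformation of `A`. -/
theorem miniversal_deformation_Lpq_Lq1s
    {t : ℕ} (o : Fin (t - 1) → Bool) {𝔽 : Type} [RCLike 𝔽]
    (p q s : ℕ) (hpq : p ≤ q) (hqs : q < s) (hs : s < t)
    (A : QRep (Fin t) (Fin (t - 1)) (chainSrc o) (chainTgt o)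
      (fun v => Fin (Ldim p q v) ⊕ Fin (Ldim (q + 1) s v)) 𝔽)
    (hA : A = fun α => Matrix.fromBlocks (Lrep p q o 𝔽 α) 0 0 (Lrep (q + 1) s o 𝔽 α))
    (D : (Fin 1 → 𝔽) → QRep (Fin t) (Fin (t - 1)) (chainSrc o) (chainTgt o)
      (fun v => Fin (Ldim p q v) ⊕ Fin (Ldim (q + 1) s v)) 𝔽)
    (hD : D = fun lam α => Matrix.of fun i j =>
      A α i j + (if α = (⟨q, by omega⟩ : Fin (t - 1)) then lam 0 else 0)) :
    IsMiniversal A D := by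
  have hq : q < t - 1 := by omega
  set e : Fin (t - 1) := ⟨q, hq⟩
  have hA_apply : ∀ β i j, A β i j = if β = e then 0 else 1 := fun β i j => by
    simp only [hA, fromBlocks_Lrep_apply, e, Fin.ext_iff]
  have hD_apply : ∀ lam β i j, D lam β i j = A β i j + if β = e then lam 0 else 0 := by
    subst hD; intros; rfl
  have hends := chainSrc_chainTgt_val o e
  have he : e.1 = q := rfl
  obtain ⟨i⟩ := nonempty_Ldim_sum (a := p) (b := q) (d := s) (v := chainTgt o e)
    (by omega) (by omega)
  obtain ⟨j⟩ := nonempty_Ldim_sum (a := p) (b := q) (d := s) (v := chainSrc o e)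
    (by omega) (by omega)
  have hAe : A e = 0 := Matrix.ext fun i j => by simp [hA_apply]
  refine ⟨isVersal_of_thin_chain (fun β i j hβ => by simp [hA_apply, hβ]) hD_apply,
    fun l B hB => ?_⟩
  exact one_le_of_isVersal hB (isDeformation_add_single hD_apply)
    (not_defEquiv_const_of_add_single hAe i j hD_apply)
end

section
/- Let 𝔽 be ℝ or ℂ, let a ∈ 𝔽^{2×1} be the column (1, 0)ᵀ and b ∈ 𝔽^{1×2} the row (0, 1). In the 𝔽-vector space 𝔽^{2×1} × 𝔽^{1×2}, let V = {(C·a − a·c₁, c₃·b − b·C) : c₁, c₃ ∈ 𝔽, C ∈ 𝔽^{2×2}} and let W be the one-dimensional subspace spanned by (0, e) where e ∈ 𝔽^{1×2} is the row (1, 0). Then 𝔽^{2×1} × 𝔽^{1×2} = V ⊕ W, i.e. V ∩ W = {0} and V + W = 𝔽^{2×1} × 𝔽^{1×2}. -/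
open Pointwise

/-!
Writing `C = (cᵢⱼ)`, the pair `(C a - c₁ a, c₃ b - b C)` is `((c₀₀ - c₁, c₁₀), (-c₁₀, c₃ - c₁₁))`:
the entry `c₁₀` appears in both components with opposite signs and every other entry is free.
So `V` is the kernel of the functional `(p, q) ↦ p₁₀ + q₀₀`, which does not vanish on `(0, e)`,
and a hyperplane is complemented by any line it does not contain.
-/

theorem Submodule.coe_inter_eq_zero_and_coe_add_eq_univ {R M : Type*} [Semiring R]
    [AddCommMonoid M] [Module R M] {p q : Submodule R M} (h : IsCompl p q) :
    (p : Set M) ∩ (q : Set M) = {0} ∧ (p : Set M) + (q : Set M) = Set.univ := by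
  rw [← Submodule.coe_inf, ← Submodule.coe_sup, h.inf_eq_bot, h.sup_eq_top]
  exact ⟨Submodule.bot_coe, Submodule.top_coe⟩

theorem LinearMap.isCompl_ker_span_singleton {K M : Type*} [DivisionRing K] [AddCommGroup M]
    [Module K M] {φ : M →ₗ[K] K} {w : M} (hw : φ w ≠ 0) : IsCompl (LinearMap.ker φ) (K ∙ w) :=
  Submodule.isCompl_span_singleton_of_isCoatom_of_notMem
    (LinearMap.isCoatom_ker_of_surjective
      (LinearMap.surjective_of_ne_zero (fun h ↦ hw (by rw [h, LinearMap.zero_apply]))))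
    hw

section

variable {R : Type*} [Ring R]

def cornerSum : (Matrix (Fin 2) (Fin 1) R × Matrix (Fin 1) (Fin 2) R) →ₗ[R] R where
  toFun x := x.1 1 0 + x.2 0 0
  map_add' x y := by
    simp only [Prod.fst_add, Prod.snd_add, Matrix.add_apply]
    abel
  map_smul' c x := by
    simp only [Prod.smul_fst, Prod.smul_snd, Matrix.smul_apply, smul_eq_mul, RingHom.id_apply]
    rw [mul_add]

theorem exists_bracket_iff_cornerSum_eq_zero
    (x : Matrix (Fin 2) (Fin 1) R × Matrix (Fin 1) (Fin 2) R) :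
    (∃ (c₁ c₃ : R) (C : Matrix (Fin 2) (Fin 2) R),
      x = (C * !![(1 : R); 0] - c₁ • !![1; 0], c₃ • !![0, 1] - !![(0 : R), 1] * C)) ↔
      cornerSum x = 0 := by
  constructor
  · rintro ⟨c₁, c₃, C, rfl⟩
    simp [cornerSum, Matrix.mul_apply, Matrix.vecMul, dotProduct, Fin.sum_univ_two,
      Matrix.vecHead]
  · obtain ⟨p, q⟩ := x
    intro hx
    refine ⟨0, q 0 1, !![p 0 0, 0; p 1 0, 0], ?_⟩
    refine Prod.ext ?_ ?_ <;> ext i j <;> fin_cases i <;> fin_cases j <;> simp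
    exact eq_neg_of_add_eq_zero_right hx

end

/-- Let `𝔽` be `ℝ` or `ℂ`, `a = (1,0)ᵀ ∈ 𝔽^{2×1}`, `b = (0,1) ∈ 𝔽^{1×2}`. In
`𝔽^{2×1} × 𝔽^{1×2}`, let `V = {(C·a − a·c₁, c₃·b − b·C)}` and let `W` be the span of
`(0, e)` with `e = (1,0) ∈ 𝔽^{1×2}`. Then `𝔽^{2×1} × 𝔽^{1×2} = V ⊕ W`, i.e.
`V ∩ W = {0}` and `V + W` is everything. -/
theorem direct_sum_decomposition_L12_L23_right_right (𝔽 : Type) [RCLike 𝔽]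
    (a : Matrix (Fin 2) (Fin 1) 𝔽) (ha : a = !![1; 0])
    (b : Matrix (Fin 1) (Fin 2) 𝔽) (hb : b = !![0, 1])
    (e : Matrix (Fin 1) (Fin 2) 𝔽) (he : e = !![1, 0])
    (V W : Set (Matrix (Fin 2) (Fin 1) 𝔽 × Matrix (Fin 1) (Fin 2) 𝔽))
    (hV : V = {x | ∃ (c₁ c₃ : 𝔽) (C : Matrix (Fin 2) (Fin 2) 𝔽),
      x = (C * a - c₁ • a, c₃ • b - b * C)})
    (hW : W = {x | ∃ μ : 𝔽, x = μ • ((0 : Matrix (Fin 2) (Fin 1) 𝔽), e)}) :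
    V ∩ W = {0} ∧ V + W = Set.univ := by
  subst ha hb he
  have hV_ker : V = LinearMap.ker (cornerSum (R := 𝔽)) := by
    ext x
    rw [hV]
    exact exists_bracket_iff_cornerSum_eq_zero x
  have hW_span : W = (𝔽 ∙ ((0 : Matrix (Fin 2) (Fin 1) 𝔽), !![(1 : 𝔽), 0]) : Set _) := by
    rw [hW, Submodule.span_singleton_eq_range]
    ext x
    simp [eq_comm]
  rw [hV_ker, hW_span]
  exact Submodule.coe_inter_eq_zero_and_coe_add_eq_univ
    (LinearMap.isCompl_ker_span_singleton (by simp [cornerSum]))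
end

section
/- Let 𝔽 be ℝ or ℂ, let a ∈ 𝔽^{1×2} be the row (1, 0) and b ∈ 𝔽^{2×1} the column (0, 1)ᵀ. In the 𝔽-vector space 𝔽^{1×2} × 𝔽^{2×1}, let V = {(c₁·a − a·C, C·b − b·c₃) : c₁, c₃ ∈ 𝔽, C ∈ 𝔽^{2×2}} and let W be the one-dimensional subspace spanned by (0, e) where e ∈ 𝔽^{2×1} is the column (1, 0)ᵀ. Then 𝔽^{1×2} × 𝔽^{2×1} = V ⊕ W, i.e. V ∩ W = {0} and V + W = 𝔽^{1×2} × 𝔽^{2×1}. -/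
/-!
Writing `C = (Cᵢⱼ)`, an element of `V` is `((c₁ - C₀₀, -C₀₁), (C₀₁, C₁₁ - c₃)ᵀ)`: its four entries
are free except that the second and third cancel. So `V` is the hyperplane `p₀₁ + q₀₀ = 0`, and
`(0, e)` lies off it, hence spans a complement.
-/

open Pointwise

namespace Submodule

theorem inter_eq_zero_and_add_eq_univ_of_isCompl {R M : Type*} [Semiring R] [AddCommMonoid M]
    [Module R M] {p q : Submodule R M} (h : IsCompl p q) :
    (p : Set M) ∩ q = {0} ∧ (p : Set M) + (q : Set M) = Set.univ := by
  constructor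
  · rw [← coe_inf, h.inf_eq_bot, bot_coe]
  · rw [← coe_sup, h.sup_eq_top, top_coe]

end Submodule

namespace LinearMap

theorem isCompl_ker_span_singleton_s9 {K M : Type*} [DivisionRing K] [AddCommGroup M]
    [Module K M] {φ : M →ₗ[K] K} {v : M} (hv : φ v ≠ 0) :
    IsCompl (ker φ) (K ∙ v) :=
  have hφ : φ ≠ 0 := fun h ↦ hv (by simp [h])
  Submodule.isCompl_span_singleton_of_isCoatom_of_notMem
    (isCoatom_ker_of_surjective (surjective_of_ne_zero hφ)) hv

end LinearMap

variable {R : Type*} [CommRing R]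

def crossEntrySum : Matrix (Fin 1) (Fin 2) R × Matrix (Fin 2) (Fin 1) R →ₗ[R] R :=
  Matrix.entryLinearMap R R (0 : Fin 1) (1 : Fin 2) ∘ₗ LinearMap.fst R _ _ +
    Matrix.entryLinearMap R R (0 : Fin 2) (0 : Fin 1) ∘ₗ LinearMap.snd R _ _

@[simp]
theorem crossEntrySum_apply (x : Matrix (Fin 1) (Fin 2) R × Matrix (Fin 2) (Fin 1) R) :
    crossEntrySum x = x.1 0 1 + x.2 0 0 :=
  rfl

theorem mem_ker_crossEntrySum_iff {x : Matrix (Fin 1) (Fin 2) R × Matrix (Fin 2) (Fin 1) R} :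
    x ∈ LinearMap.ker crossEntrySum ↔ ∃ (c₁ c₃ : R) (C : Matrix (Fin 2) (Fin 2) R),
      x = (c₁ • !![1, 0] - (!![1, 0] : Matrix (Fin 1) (Fin 2) R) * C,
        C * (!![0; 1] : Matrix (Fin 2) (Fin 1) R) - c₃ • !![0; 1]) := by
  obtain ⟨p, q⟩ := x
  rw [LinearMap.mem_ker, crossEntrySum_apply]
  constructor
  · intro h
    have hq : q 0 0 = -p 0 1 := by linear_combination h
    refine ⟨p 0 0, 0, !![0, -p 0 1; 0, q 1 0], Prod.ext ?_ ?_⟩ <;>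
    · ext i j
      fin_cases i <;> fin_cases j <;> simp [hq]
  · rintro ⟨c₁, c₃, C, ⟨rfl, rfl⟩⟩
    simp [Matrix.mul_apply, Matrix.vecMul, dotProduct, Fin.sum_univ_two]

/-- Let `𝔽` be `ℝ` or `ℂ`, `a = (1,0) ∈ 𝔽^{1×2}`, `b = (0,1)ᵀ ∈ 𝔽^{2×1}`. In
`𝔽^{1×2} × 𝔽^{2×1}`, let `V = {(c₁·a − a·C, C·b − b·c₃)}` and let `W` be the span of
`(0, e)` with `e = (1,0)ᵀ ∈ 𝔽^{2×1}`. Then `𝔽^{1×2} × 𝔽^{2×1} = V ⊕ W`, i.e.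
`V ∩ W = {0}` and `V + W` is everything. -/
theorem direct_sum_decomposition_L12_L23_left_left (𝔽 : Type) [RCLike 𝔽]
    (a : Matrix (Fin 1) (Fin 2) 𝔽) (ha : a = !![1, 0])
    (b : Matrix (Fin 2) (Fin 1) 𝔽) (hb : b = !![0; 1])
    (e : Matrix (Fin 2) (Fin 1) 𝔽) (he : e = !![1; 0])
    (V W : Set (Matrix (Fin 1) (Fin 2) 𝔽 × Matrix (Fin 2) (Fin 1) 𝔽))
    (hV : V = {x | ∃ (c₁ c₃ : 𝔽) (C : Matrix (Fin 2) (Fin 2) 𝔽),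
      x = (c₁ • a - a * C, C * b - c₃ • b)})
    (hW : W = {x | ∃ μ : 𝔽, x = μ • ((0 : Matrix (Fin 1) (Fin 2) 𝔽), e)}) :
    V ∩ W = {0} ∧ V + W = Set.univ := by
  subst ha hb he
  have hV' : V = LinearMap.ker (crossEntrySum (R := 𝔽)) := by
    ext x
    rw [hV, SetLike.mem_coe, mem_ker_crossEntrySum_iff, Set.mem_ofPred_eq]
  have hW' : W = 𝔽 ∙ ((0 : Matrix (Fin 1) (Fin 2) 𝔽), (!![1; 0] : Matrix (Fin 2) (Fin 1) 𝔽)) := by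
    ext x
    rw [hW, SetLike.mem_coe, Submodule.mem_span_singleton, Set.mem_ofPred_eq]
    exact exists_congr fun μ ↦ eq_comm
  rw [hV', hW']
  exact Submodule.inter_eq_zero_and_add_eq_univ_of_isCompl
    (LinearMap.isCompl_ker_span_singleton_s9 (by simp))
end

section
/- Let m ≥ 3 be a natural number, and define sequences of real numbers ε₁, δ₁, ε₂, δ₂, … by ε₁ = δ₁ = m^{−7}, ε_{i+1} = m·ε_i·δ_i, and δ_{i+1} = δ_i + m·ε_i. Then ε_i < m^{−4i} and δ_i < m^{−5} for all i ≥ 1, and the series ε₁ + ε₂ + ε₃ + ⋯ converges with sum less than 2. -/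
/-!
Write `r = m⁻¹ ≤ 1/3`. By induction, `0 ≤ εᵢ ≤ r^(4i+3)` and `δᵢ + 2 r^(4i+2) ≤ r^5`:
the recursion multiplies the bound on `ε` by `m · r^5 = r^4`, and the increment `m εᵢ ≤ r^(4i+2)`
of `δ` is paid for by the slack `2 r^(4i+2) - 2 r^(4i+6) ≥ r^(4i+2)`, since `2 r^4 ≤ 1`.
The series `∑ εᵢ` is then dominated by the geometric series `r^7 ∑ (r^4)^i ≤ 2 r^7`.
-/

lemma summable_and_tsum_le_of_le_geometric {f : ℕ → ℝ} {c q : ℝ} (hq0 : 0 ≤ q) (hq1 : q < 1)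
    (hf0 : ∀ i, 0 ≤ f i) (hf : ∀ i, f i ≤ c * q ^ i) :
    Summable f ∧ ∑' i, f i ≤ c / (1 - q) := by
  have hg : Summable fun i => c * q ^ i := (summable_geometric_of_lt_one hq0 hq1).mul_left c
  have hsum : Summable f := .of_nonneg_of_le hf0 hf hg
  refine ⟨hsum, ?_⟩
  calc ∑' i, f i ≤ ∑' i, c * q ^ i := hsum.tsum_le_tsum hf hg
    _ = c / (1 - q) := by rw [tsum_mul_left, tsum_geometric_of_lt_one hq0 hq1, div_eq_mul_inv]

namespace EpsDelta

variable {m e d : ℝ}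

lemma eps_succ_le (i : ℕ) (hm : 0 < m) (hd0 : 0 ≤ d) (he : e ≤ m⁻¹ ^ (4 * i + 3))
    (hd : d ≤ m⁻¹ ^ 5) : m * e * d ≤ m⁻¹ ^ (4 * (i + 1) + 3) :=
  calc m * e * d ≤ m * m⁻¹ ^ (4 * i + 3) * m⁻¹ ^ 5 := by gcongr
    _ = m⁻¹ ^ (4 * (i + 1) + 3) := by simp only [inv_pow]; field_simp; ring

lemma delta_succ_add_le (i : ℕ) (hm : 0 < m) (hm4 : 2 ≤ m ^ 4) (he : e ≤ m⁻¹ ^ (4 * i + 3))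
    (hd : d + 2 * m⁻¹ ^ (4 * i + 2) ≤ m⁻¹ ^ 5) :
    d + m * e + 2 * m⁻¹ ^ (4 * (i + 1) + 2) ≤ m⁻¹ ^ 5 := by
  have hme : m * e ≤ m⁻¹ ^ (4 * i + 2) :=
    calc m * e ≤ m * m⁻¹ ^ (4 * i + 3) := by gcongr
      _ = m⁻¹ ^ (4 * i + 2) := by simp only [inv_pow]; field_simp; ring
  have hslack : 2 * m⁻¹ ^ (4 * (i + 1) + 2) ≤ m⁻¹ ^ (4 * i + 2) :=
    calc 2 * m⁻¹ ^ (4 * (i + 1) + 2) = 2 / m ^ 4 * m⁻¹ ^ (4 * i + 2) := by simp only [inv_pow]; field_simp; ring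
      _ ≤ 1 * m⁻¹ ^ (4 * i + 2) := by gcongr; rwa [div_le_one (by positivity)]
      _ = m⁻¹ ^ (4 * i + 2) := one_mul _
  linarith

lemma bounds_of_recursion {ε δ : ℕ → ℝ} (hm : 3 ≤ m) (hε1 : ε 1 = m⁻¹ ^ 7) (hδ1 : δ 1 = m⁻¹ ^ 7)
    (hεrec : ∀ i ≥ 1, ε (i + 1) = m * ε i * δ i)
    (hδrec : ∀ i ≥ 1, δ (i + 1) = δ i + m * ε i) :
    ∀ i ≥ 1, 0 ≤ ε i ∧ 0 ≤ δ i ∧ ε i ≤ m⁻¹ ^ (4 * i + 3) ∧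
      δ i + 2 * m⁻¹ ^ (4 * i + 2) ≤ m⁻¹ ^ 5 := by
  have hm0 : 0 < m := by linarith
  have hm4 : 2 ≤ m ^ 4 := by nlinarith [pow_le_pow_left₀ (by norm_num) hm 4]
  intro i hi
  induction i, hi using Nat.le_induction with
  | base =>
    have hr0 : 0 < m⁻¹ := inv_pos.mpr hm0
    have hr : m⁻¹ ≤ 1 / 3 := by rw [one_div]; exact inv_anti₀ (by norm_num) hm
    rw [hε1, hδ1]
    refine ⟨by positivity, by positivity, le_rfl, ?_⟩
    have : m⁻¹ ^ 5 * (m⁻¹ ^ 2 + 2 * m⁻¹ - 1) ≤ 0 :=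
      mul_nonpos_of_nonneg_of_nonpos (by positivity) (by nlinarith)
    linarith
  | succ i hi ih =>
    obtain ⟨he0, hd0, he, hd⟩ := ih
    have hd5 : δ i ≤ m⁻¹ ^ 5 := by linarith [pow_pos (inv_pos.mpr hm0) (4 * i + 2)]
    rw [hεrec i hi, hδrec i hi]
    exact ⟨by positivity, by positivity, eps_succ_le i hm0 hd0 he hd5,
      delta_succ_add_le i hm0 hm4 he hd⟩

end EpsDelta

/-- **Lemma 8.** Let `m ≥ 3` be a natural number and define
`ε₁ = δ₁ = m⁻⁷`, `ε_{i+1} = m·ε_i·δ_i`, `δ_{i+1} = δ_i + m·ε_i`. Then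
`ε_i < m^{-4i}` and `δ_i < m^{-5}` for all `i ≥ 1`, and
`ε₁ + ε₂ + ε₃ + ⋯` converges with sum `< 2`. -/
theorem eps_delta_sequences_bounds (m : ℕ) (hm : 3 ≤ m) (ε δ : ℕ → ℝ)
    (hε1 : ε 1 = ((m : ℝ) ^ 7)⁻¹) (hδ1 : δ 1 = ((m : ℝ) ^ 7)⁻¹)
    (hεrec : ∀ i ≥ 1, ε (i + 1) = m * ε i * δ i)
    (hδrec : ∀ i ≥ 1, δ (i + 1) = δ i + m * ε i) :
    (∀ i ≥ 1, ε i < ((m : ℝ) ^ (4 * i))⁻¹ ∧ δ i < ((m : ℝ) ^ 5)⁻¹) ∧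
      Summable (fun i : ℕ => ε (i + 1)) ∧ ∑' i : ℕ, ε (i + 1) < 2 := by
  have hm3 : (3 : ℝ) ≤ m := by exact_mod_cast hm
  have hr0 : 0 < (m : ℝ)⁻¹ := by positivity
  have hr1 : (m : ℝ)⁻¹ < 1 := inv_lt_one_of_one_lt₀ (by linarith)
  rw [← inv_pow] at hε1 hδ1
  have key := EpsDelta.bounds_of_recursion hm3 hε1 hδ1 hεrec hδrec
  simp only [← inv_pow]
  refine ⟨fun i hi => ?_, ?_⟩
  · obtain ⟨-, -, he, hd⟩ := key i hi
    exact ⟨he.trans_lt (pow_lt_pow_right_of_lt_one₀ hr0 hr1 (by omega)),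
      by linarith [pow_pos hr0 (4 * i + 2)]⟩
  · have hq : (m : ℝ)⁻¹ ^ 4 < 1 := pow_lt_one₀ hr0.le hr1 (by norm_num)
    obtain ⟨hsum, hle⟩ := summable_and_tsum_le_of_le_geometric (c := (m : ℝ)⁻¹ ^ 7) (pow_nonneg hr0.le 4) hq
      (fun i => (key (i + 1) (by omega)).1)
      (fun i => ((key (i + 1) (by omega)).2.2.1).trans_eq (by ring))
    have hq2 : (m : ℝ)⁻¹ ^ 4 ≤ 1 / 2 := by
      have : (m : ℝ)⁻¹ ≤ 1 / 3 := by rw [one_div]; exact inv_anti₀ (by norm_num) hm3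
      calc (m : ℝ)⁻¹ ^ 4 ≤ (1 / 3) ^ 4 := by gcongr
        _ ≤ 1 / 2 := by norm_num
    have h7 : (m : ℝ)⁻¹ ^ 7 < 1 := pow_lt_one₀ hr0.le hr1 (by norm_num)
    refine ⟨hsum, hle.trans_lt ?_⟩
    rw [div_lt_iff₀ (by linarith)]
    nlinarith
end

section
/- Let Q be a quiver with vertices 1,…,t, A ∈ R(n⃗,𝔽) a matrix representation of dimension n⃗, and Γ ⊆ Υ_{n⃗} a subset such that R(n⃗,𝔽) = [𝔽^{n⃗×n⃗}, A] ⊕ E_Γ. Then there exist δ > 0 and a map M ↦ S(M) assigning to each M ∈ R(n⃗,𝔽) with ‖M‖ < δ an n⃗-sequence S(M) = (S(M)₁,…,S(M)_t) of invertible matrices, whose entries are holomorphic (real-analytic when 𝔽 = ℝ) functions of the entries of M on {M : ‖M‖ < δ}, such that S(0) = I_{n⃗} and, for every M with ‖M‖ < δ, the representation with matrices S(M)_q (A_α + M_α) S(M)_p^{-1} − A_α (α : p → q) belongs to E_Γ. -/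
open Matrix Filter Pointwise

variable {V Arrow : Type} {src tgt : Arrow → V} {N : V → Type} {𝔽 : Type} [RCLike 𝔽]

/-- `n⃗`-sequences: tuples `(C_v)_{v ∈ V}` of square matrices `C_v ∈ 𝔽^{N v × N v}`. -/
abbrev QSeq (V : Type) (N : V → Type) (𝔽 : Type) : Type := ∀ v : V, Matrix (N v) (N v) 𝔽

variable {V Arrow : Type} {src tgt : Arrow → V} {N : V → Type} {𝔽 : Type} [RCLike 𝔽]

/-- `‖M‖`: the sum of the absolute values of all entries of all matrices of `M`. -/
def repNorm [Fintype Arrow] [∀ v, Fintype (N v)] (M : QRep V Arrow src tgt N 𝔽) : ℝ :=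
  ∑ α : Arrow, ∑ i, ∑ j, ‖M α i j‖

/-- `‖M‖_Γ`: the sum of the absolute values of the entries `m_{αij}` with `(α,i,j) ∉ Γ`. -/
def repNormGamma [Fintype Arrow] [DecidableEq Arrow]
    [∀ v, Fintype (N v)] [∀ v, DecidableEq (N v)]
    (Γ : Finset (QIdx V Arrow src tgt N)) (M : QRep V Arrow src tgt N 𝔽) : ℝ :=
  ∑ x ∈ Γᶜ, ‖M x.1 x.2.1 x.2.2‖

/-- The norm of an `n⃗`-sequence: the sum of the absolute values of all entries. -/
def seqNorm [Fintype V] [∀ v, Fintype (N v)] (X : QSeq V N 𝔽) : ℝ :=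
  ∑ v, ∑ i, ∑ j, ‖X v i j‖

/-- The representation whose matrix entries are given by a tuple `f : Υ → 𝔽`. -/
def ofEntries (f : QIdx V Arrow src tgt N → 𝔽) : QRep V Arrow src tgt N 𝔽 :=
  fun α => Matrix.of fun i j => f ⟨α, (i, j)⟩


/-! Write `S = 1 + C` and let `E_g ∈ E_Γ` have entries `g` on `Γ`. The analytic map
`(C, g) ↦ M = S⁻¹ ((A + E_g) S - S A)` satisfies `S (A + M) S⁻¹ - A = E_g` whenever `S` is
invertible, and its derivative at `0` is `(C, g) ↦ E_g - [C, A]`, which is onto precisely because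
`[𝔽^{n⃗×n⃗}, A] + E_Γ` is everything. An analytic map with surjective derivative has an analytic
local right inverse `M ↦ (C(M), g(M))` (the analytic inverse function theorem on a complement of
the kernel), and `S(M) = 1 + C(M)` is the required family. -/

open Topology

section Analysis

variable {𝕜 : Type*} [NontriviallyNormedField 𝕜]
  {E : Type*} [NormedAddCommGroup E] [NormedSpace 𝕜 E]

theorem analyticAt_apply {ι : Type*} [Fintype ι] (i : ι) (x : ι → 𝕜) :
    AnalyticAt 𝕜 (fun f : ι → 𝕜 => f i) x :=
  (ContinuousLinearMap.proj (R := 𝕜) (φ := fun _ : ι => 𝕜) i).analyticAt x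

theorem DifferentiableAt.hasFDerivAt_mul_of_eq_zero {u w : E → 𝕜} {w' : E →L[𝕜] 𝕜} {x : E}
    (hu : DifferentiableAt 𝕜 u x) (hw : HasFDerivAt w w' x) (hw0 : w x = 0) :
    HasFDerivAt (fun y => u y * w y) (u x • w') x := by
  refine (hu.hasFDerivAt.fun_mul hw).congr_fderiv ?_
  ext
  simp [hw0]

section Matrix

variable {n : Type*} [Fintype n] [DecidableEq n] {f : E → Matrix n n 𝕜} {x : E}

theorem AnalyticAt.matrix_det (hf : ∀ i j, AnalyticAt 𝕜 (fun y => f y i j) x) :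
    AnalyticAt 𝕜 (fun y => (f y).det) x := by
  simp_rw [Matrix.det_apply']
  exact Finset.analyticAt_fun_sum _ fun σ _ =>
    analyticAt_const.mul (Finset.analyticAt_fun_prod _ fun i _ => hf _ _)

theorem AnalyticAt.matrix_adjugate (hf : ∀ i j, AnalyticAt 𝕜 (fun y => f y i j) x) (i j : n) :
    AnalyticAt 𝕜 (fun y => (f y).adjugate i j) x := by
  simp_rw [Matrix.adjugate_apply]
  refine AnalyticAt.matrix_det fun k l => ?_
  by_cases hk : k = j
  · simp only [Matrix.updateRow_apply, hk, if_true]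
    exact analyticAt_const
  · simpa only [Matrix.updateRow_apply, hk, if_false] using hf k l

theorem AnalyticAt.matrix_inv (hf : ∀ i j, AnalyticAt 𝕜 (fun y => f y i j) x)
    (hdet : (f x).det ≠ 0) (i j : n) :
    AnalyticAt 𝕜 (fun y => (f y)⁻¹ i j) x := by
  simp_rw [Matrix.inv_def, Matrix.smul_apply, Ring.inverse_eq_inv, smul_eq_mul]
  exact ((AnalyticAt.matrix_det hf).inv hdet).mul (AnalyticAt.matrix_adjugate hf i j)

theorem AnalyticAt.eventually_isUnit_matrix (hf : ∀ i j, AnalyticAt 𝕜 (fun y => f y i j) x)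
    (hx : IsUnit (f x)) : ∀ᶠ y in 𝓝 x, IsUnit (f y) := by
  have hdet : (f x).det ≠ 0 := ((Matrix.isUnit_iff_isUnit_det _).mp hx).ne_zero
  filter_upwards [(AnalyticAt.matrix_det hf).continuousAt.eventually_ne hdet] with y hy
  exact (Matrix.isUnit_iff_isUnit_det _).mpr hy.isUnit

end Matrix

theorem AnalyticAt.exists_rightInverse [CompleteSpace 𝕜] {F : Type*} [NormedAddCommGroup F]
    [NormedSpace 𝕜 F] [FiniteDimensional 𝕜 F] {f : E → F} {f' : E →L[𝕜] F} {x : E}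
    (hf : AnalyticAt 𝕜 f x) (hf' : HasFDerivAt f f' x) (hsurj : Function.Surjective f') :
    ∃ g : F → E, g (f x) = x ∧ AnalyticAt 𝕜 g (f x) ∧ ∀ᶠ y in 𝓝 (f x), f (g y) = y := by
  have := FiniteDimensional.complete 𝕜 F
  obtain ⟨σ, hσ⟩ :=
    f'.toLinearMap.exists_rightInverse_of_surjective (LinearMap.range_eq_top.mpr hsurj)
  let σc : F →L[𝕜] E := LinearMap.toContinuousLinearMap σ
  -- on the slice `x + range σ` the derivative of `f` becomes the identity
  let φ : F → F := fun y => f (x + σc y)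
  have hφ0 : φ 0 = f x := by simp [φ]
  have hslice : AnalyticAt 𝕜 (fun y => x + σc y) 0 := analyticAt_const.add (σc.analyticAt 0)
  have hφ : AnalyticAt 𝕜 φ 0 := hf.comp_of_eq hslice (by simp)
  have hφ' : fderiv 𝕜 φ 0 = (ContinuousLinearEquiv.refl 𝕜 F : F →L[𝕜] F) := by
    have : HasFDerivAt φ (f'.comp σc) 0 :=
      (by simpa using hf' : HasFDerivAt f f' (x + σc 0)).comp 0
        ((σc.hasFDerivAt (x := (0 : F))).const_add x)
    rw [this.fderiv]
    ext y
    exact LinearMap.congr_fun hσ y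
  have hstrict : HasStrictFDerivAt φ (ContinuousLinearEquiv.refl 𝕜 F : F →L[𝕜] F) 0 :=
    hφ' ▸ hφ.hasStrictFDerivAt
  let R := hstrict.toOpenPartialHomeomorph φ
  have hR0 : (0 : F) ∈ R.source := hstrict.mem_toOpenPartialHomeomorph_source
  have hRφ : (R : F → F) = φ := rfl
  refine ⟨fun y => x + σc (R.symm y), ?_, ?_, ?_⟩
  · simp [← hφ0, ← hRφ, R.left_inv hR0]
  · rw [← hφ0, ← hRφ]
    exact analyticAt_const.add (σc.analyticAt _ |>.comp (R.analyticAt_symm' hR0 hφ hφ'))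
  · rw [← hφ0, ← hRφ]
    exact R.eventually_right_inverse' hR0

end Analysis

attribute [local fun_prop] analyticAt_fst analyticAt_snd analyticAt_apply

theorem Matrix.conj_add_inv_mul_sub_mul {K m n : Type*} [CommRing K] [Fintype m]
    [DecidableEq m] [Fintype n] [DecidableEq n] {P : Matrix m m K} {Q : Matrix n n K}
    (hP : IsUnit P) (hQ : IsUnit Q) (A E : Matrix m n K) :
    P * (A + P⁻¹ * ((A + E) * Q - P * A)) * Q⁻¹ = A + E := by
  rw [Matrix.isUnit_iff_isUnit_det] at hP hQ
  rw [Matrix.mul_add, Matrix.mul_nonsing_inv_cancel_left _ _ hP, add_sub_cancel,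
    Matrix.mul_nonsing_inv_cancel_right _ _ hQ]

abbrev QSeqIdx (V : Type) (N : V → Type) : Type := Σ v : V, N v × N v

def seqOfEntries (c : QSeqIdx V N → 𝔽) : QSeq V N 𝔽 :=
  fun v => Matrix.of fun i j => c ⟨v, (i, j)⟩

def toEntries (M : QRep V Arrow src tgt N 𝔽) : QIdx V Arrow src tgt N → 𝔽 :=
  fun x => M x.1 x.2.1 x.2.2

theorem norm_toEntries_le_repNorm [Fintype Arrow] [∀ v, Fintype (N v)]
    (M : QRep V Arrow src tgt N 𝔽) : ‖toEntries M‖ ≤ repNorm M := by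
  have hsum : repNorm M = ∑ x, ‖toEntries M x‖ := by
    simp only [repNorm, toEntries, Fintype.sum_sigma, Fintype.sum_prod_type]
  rw [hsum]
  exact (pi_norm_le_iff_of_nonneg (by positivity)).mpr fun x =>
    Finset.single_le_sum (fun y _ => norm_nonneg (toEntries M y)) (Finset.mem_univ x)

@[simp] theorem toEntries_zero : toEntries (0 : QRep V Arrow src tgt N 𝔽) = 0 := rfl

variable (V Arrow src tgt N 𝔽) in
/-- Parameters `(c, g)` of a gauge: `c` are the entries of `S - 1`, and the entries of `g` on `Γ`
are those of the target `S (A + M) S⁻¹ - A ∈ E_Γ`. -/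
abbrev GaugeParam : Type := (QSeqIdx V N → 𝔽) × (QIdx V Arrow src tgt N → 𝔽)

section Gauge

variable [∀ v, DecidableEq (N v)]

def gaugeSeq (z : GaugeParam V Arrow src tgt N 𝔽) : QSeq V N 𝔽 :=
  fun v => 1 + seqOfEntries z.1 v

theorem gaugeSeq_zero : gaugeSeq (0 : GaugeParam V Arrow src tgt N 𝔽) = fun _ => 1 := by
  funext v
  ext i j
  simp [gaugeSeq, seqOfEntries]

section Analytic

variable [Fintype V] [Fintype Arrow] [∀ v, Fintype (N v)]

theorem analyticAt_gaugeSeq_apply (v : V) (i j : N v) (z₀ : GaugeParam V Arrow src tgt N 𝔽) :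
    AnalyticAt 𝔽 (fun z => gaugeSeq z v i j) z₀ := by
  simp only [gaugeSeq, seqOfEntries, Matrix.add_apply, Matrix.of_apply]
  fun_prop

theorem analyticAt_gaugeSeq_inv_apply (v : V) (i j : N v) :
    AnalyticAt 𝔽 (fun z : GaugeParam V Arrow src tgt N 𝔽 => (gaugeSeq z v)⁻¹ i j) 0 :=
  AnalyticAt.matrix_inv (fun i j => analyticAt_gaugeSeq_apply v i j 0) (by simp [gaugeSeq_zero]) i j

end Analytic

variable [DecidableEq Arrow]

def ofEntriesOn (Γ : Finset (QIdx V Arrow src tgt N)) (g : QIdx V Arrow src tgt N → 𝔽) :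
    QRep V Arrow src tgt N 𝔽 :=
  ofEntries fun x => if x ∈ Γ then g x else 0

theorem ofEntriesOn_zero (Γ : Finset (QIdx V Arrow src tgt N)) :
    ofEntriesOn Γ (0 : QIdx V Arrow src tgt N → 𝔽) = 0 := by
  funext α
  ext i j
  simp [ofEntriesOn, ofEntries]

theorem mem_eGamma_iff {Γ : Finset (QIdx V Arrow src tgt N)} {R : QRep V Arrow src tgt N 𝔽} :
    R ∈ eGamma (𝔽 := 𝔽) Γ ↔ ∀ x ∉ Γ, toEntries R x = 0 := by
  rw [eGamma, SetLike.mem_coe]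
  constructor
  · intro hR
    induction hR using Submodule.span_induction with
    | mem _ h =>
      obtain ⟨y, hy, rfl⟩ := h
      intro x hx
      have hxy : x ≠ y := fun h => hx (h ▸ hy)
      simp [toEntries, elemRep, hxy]
    | zero => simp [toEntries]
    | add _ _ _ _ h₁ h₂ =>
      intro x hx
      unfold toEntries at *
      simp [h₁ x hx, h₂ x hx]
    | smul a _ _ h =>
      intro x hx
      unfold toEntries at *
      simp [h x hx]
  · intro hR
    have hsum : R = ∑ x ∈ Γ, toEntries R x • elemRep x := by
      funext α
      ext i j
      by_cases h : (⟨α, (i, j)⟩ : QIdx V Arrow src tgt N) ∈ Γ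
      · simp [elemRep, Finset.sum_apply, Matrix.sum_apply, toEntries, h]
      · simpa [elemRep, Finset.sum_apply, Matrix.sum_apply, toEntries, h] using hR _ h
    rw [hsum]
    exact Submodule.sum_mem _ fun x hx =>
      Submodule.smul_mem _ _ (Submodule.subset_span ⟨x, hx, rfl⟩)

theorem ofEntriesOn_mem_eGamma (Γ : Finset (QIdx V Arrow src tgt N))
    (g : QIdx V Arrow src tgt N → 𝔽) : ofEntriesOn Γ g ∈ eGamma (𝔽 := 𝔽) Γ :=
  mem_eGamma_iff.mpr fun _ hx => if_neg hx

theorem ofEntriesOn_toEntries {Γ : Finset (QIdx V Arrow src tgt N)} {R : QRep V Arrow src tgt N 𝔽}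
    (hR : R ∈ eGamma (𝔽 := 𝔽) Γ) : ofEntriesOn Γ (toEntries R) = R := by
  funext α
  ext i j
  by_cases h : (⟨α, (i, j)⟩ : QIdx V Arrow src tgt N) ∈ Γ
  · simp [ofEntriesOn, ofEntries, toEntries, h]
  · simpa [ofEntriesOn, ofEntries, toEntries, h] using (mem_eGamma_iff.mp hR _ h).symm

variable [∀ v, Fintype (N v)] (A : QRep V Arrow src tgt N 𝔽) (Γ : Finset (QIdx V Arrow src tgt N))

def gaugeNumerator (z : GaugeParam V Arrow src tgt N 𝔽) : QRep V Arrow src tgt N 𝔽 :=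
  fun α => (A α + ofEntriesOn Γ z.2 α) * gaugeSeq z (src α) - gaugeSeq z (tgt α) * A α

/-- The perturbation `M = S⁻¹ ((A + E) S - S A)`, which `S` conjugates from `A + M` to `A + E`. -/
noncomputable def gaugeMap (z : GaugeParam V Arrow src tgt N 𝔽) : QIdx V Arrow src tgt N → 𝔽 :=
  toEntries fun α => (gaugeSeq z (tgt α))⁻¹ * gaugeNumerator A Γ z α

def gaugeDeriv : GaugeParam V Arrow src tgt N 𝔽 →ₗ[𝔽] (QIdx V Arrow src tgt N → 𝔽) where
  toFun z := toEntries fun α =>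
    ofEntriesOn Γ z.2 α + A α * seqOfEntries z.1 (src α) - seqOfEntries z.1 (tgt α) * A α
  map_add' z w := by
    funext x
    simp only [toEntries, ofEntriesOn, ofEntries, seqOfEntries, Matrix.add_apply, Matrix.sub_apply,
      Matrix.mul_apply, Matrix.of_apply, Prod.fst_add, Prod.snd_add, Pi.add_apply, mul_add, add_mul,
      Finset.sum_add_distrib]
    split_ifs <;> ring
  map_smul' a z := by
    funext x
    simp only [toEntries, ofEntriesOn, ofEntries, seqOfEntries, Matrix.add_apply, Matrix.sub_apply,
      Matrix.mul_apply, Matrix.of_apply, Prod.smul_fst, Prod.smul_snd, Pi.smul_apply, smul_eq_mul,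
      RingHom.id_apply, mul_sub, mul_add, Finset.mul_sum, mul_ite, mul_zero, mul_assoc,
      mul_left_comm a]

theorem gaugeNumerator_zero : gaugeNumerator A Γ (0 : GaugeParam V Arrow src tgt N 𝔽) = 0 := by
  funext α
  simp [gaugeNumerator, gaugeSeq_zero, ofEntriesOn_zero]

theorem gaugeNumerator_apply (z : GaugeParam V Arrow src tgt N 𝔽) (α : Arrow) (i : N (tgt α))
    (j : N (src α)) :
    gaugeNumerator A Γ z α i j = gaugeDeriv A Γ z ⟨α, (i, j)⟩ +
      ∑ l, ofEntriesOn Γ z.2 α i l * seqOfEntries z.1 (src α) l j := by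
  have : gaugeNumerator A Γ z α = (ofEntriesOn Γ z.2 α + A α * seqOfEntries z.1 (src α)
      - seqOfEntries z.1 (tgt α) * A α) + ofEntriesOn Γ z.2 α * seqOfEntries z.1 (src α) := by
    simp only [gaugeNumerator, gaugeSeq, Matrix.mul_add, Matrix.add_mul, Matrix.mul_one,
      Matrix.one_mul]
    abel
  rw [this]
  rfl

theorem gaugeMap_zero : gaugeMap A Γ (0 : GaugeParam V Arrow src tgt N 𝔽) = 0 := by
  funext x
  simp [gaugeMap, gaugeNumerator_zero, toEntries]

theorem conj_sub_mem_eGamma_of_gaugeMap_eq {z : GaugeParam V Arrow src tgt N 𝔽}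
    (hS : ∀ v, IsUnit (gaugeSeq z v)) {M : QRep V Arrow src tgt N 𝔽}
    (hM : gaugeMap A Γ z = toEntries M) :
    (fun α => gaugeSeq z (tgt α) * (A α + M α) * (gaugeSeq z (src α))⁻¹ - A α)
      ∈ eGamma (𝔽 := 𝔽) Γ := by
  have hMα : ∀ α, M α = (gaugeSeq z (tgt α))⁻¹ * gaugeNumerator A Γ z α := fun α => by
    ext i j
    exact (congrFun hM ⟨α, (i, j)⟩).symm
  simp only [hMα, gaugeNumerator, Matrix.conj_add_inv_mul_sub_mul (hS _) (hS _),
    add_sub_cancel_left]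
  exact ofEntriesOn_mem_eGamma Γ z.2

theorem gaugeDerivLin_surjective (hsum : bracketSet A + eGamma (𝔽 := 𝔽) Γ = Set.univ) :
    Function.Surjective (gaugeDeriv A Γ) := by
  intro y
  obtain ⟨B, ⟨C, hC⟩, R, hR, hBR⟩ := Set.mem_add.mp (hsum ▸ Set.mem_univ (ofEntries y))
  refine ⟨(fun x => -C x.1 x.2.1 x.2.2, toEntries R), ?_⟩
  have hBR' : (fun α => ofEntriesOn Γ (toEntries R) α + A α * (-C) (src α) - (-C) (tgt α) * A α)
      = ofEntries y := by
    rw [← hBR, ofEntriesOn_toEntries hR]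
    funext α
    rw [Pi.add_apply, hC, Pi.neg_apply, Pi.neg_apply, Matrix.mul_neg, Matrix.neg_mul]
    abel
  exact congrArg toEntries hBR'

section Analytic

variable [Fintype V] [Fintype Arrow]

theorem analyticAt_ofEntriesOn_apply (α : Arrow) (i : N (tgt α)) (j : N (src α))
    (z₀ : GaugeParam V Arrow src tgt N 𝔽) :
    AnalyticAt 𝔽 (fun z : GaugeParam V Arrow src tgt N 𝔽 => ofEntriesOn Γ z.2 α i j) z₀ := by
  simp only [ofEntriesOn, ofEntries, Matrix.of_apply]
  split_ifs <;> fun_prop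

theorem analyticAt_gaugeNumerator_apply (α : Arrow) (i : N (tgt α)) (j : N (src α))
    (z₀ : GaugeParam V Arrow src tgt N 𝔽) :
    AnalyticAt 𝔽 (fun z => gaugeNumerator A Γ z α i j) z₀ := by
  simp only [gaugeNumerator, Matrix.sub_apply, Matrix.mul_apply, Matrix.add_apply]
  refine (Finset.analyticAt_fun_sum _ fun k _ => ?_).sub (Finset.analyticAt_fun_sum _ fun k _ => ?_)
  · exact (analyticAt_const.add (analyticAt_ofEntriesOn_apply Γ α i k z₀)).mul
      (analyticAt_gaugeSeq_apply _ k j z₀)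
  · exact (analyticAt_gaugeSeq_apply _ i k z₀).mul analyticAt_const

theorem analyticAt_gaugeMap : AnalyticAt 𝔽 (gaugeMap A Γ) 0 := by
  refine analyticAt_pi_iff.mpr fun x => ?_
  simp only [gaugeMap, toEntries, Matrix.mul_apply]
  exact Finset.analyticAt_fun_sum _ fun k _ =>
    (analyticAt_gaugeSeq_inv_apply _ _ _).mul (analyticAt_gaugeNumerator_apply A Γ _ _ _ _)

theorem hasFDerivAt_gaugeNumerator_apply (α : Arrow) (i : N (tgt α)) (j : N (src α)) :
    HasFDerivAt (fun z => gaugeNumerator A Γ z α i j)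
      ((ContinuousLinearMap.proj ⟨α, (i, j)⟩).comp (gaugeDeriv A Γ).toContinuousLinearMap)
      (0 : GaugeParam V Arrow src tgt N 𝔽) := by
  simp only [gaugeNumerator_apply]
  have hquad : HasFDerivAt (fun z : GaugeParam V Arrow src tgt N 𝔽 =>
      ∑ l, ofEntriesOn Γ z.2 α i l * seqOfEntries z.1 (src α) l j)
      (0 : GaugeParam V Arrow src tgt N 𝔽 →L[𝔽] 𝔽) 0 := by
    -- a sum of products of two functions vanishing at `0`
    have := HasFDerivAt.fun_sum (u := Finset.univ) (x := (0 : GaugeParam V Arrow src tgt N 𝔽))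
      fun l _ =>
        (analyticAt_ofEntriesOn_apply Γ α i l 0).differentiableAt.hasFDerivAt_mul_of_eq_zero
        (by fun_prop : AnalyticAt 𝔽 (fun z : GaugeParam V Arrow src tgt N 𝔽 =>
          z.1 ⟨src α, (l, j)⟩) 0).differentiableAt.hasFDerivAt rfl
    refine this.congr_fderiv (ContinuousLinearMap.ext fun z => ?_)
    simp only [_root_.sum_apply, _root_.smul_apply, smul_eq_mul,
      Prod.snd_zero, ofEntriesOn_zero, Pi.zero_apply, Matrix.zero_apply, zero_mul,
      Finset.sum_const_zero, _root_.zero_apply]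
  exact (((ContinuousLinearMap.proj ⟨α, (i, j)⟩).comp
      (gaugeDeriv A Γ).toContinuousLinearMap).hasFDerivAt.fun_add hquad).congr_fderiv
    (add_zero _)

theorem hasFDerivAt_gaugeMap :
    HasFDerivAt (gaugeMap A Γ) (gaugeDeriv A Γ).toContinuousLinearMap 0 := by
  refine hasFDerivAt_pi'' fun x => ?_
  obtain ⟨α, i, j⟩ := x
  simp only [gaugeMap, toEntries, Matrix.mul_apply]
  have := HasFDerivAt.fun_sum (u := Finset.univ) (x := (0 : GaugeParam V Arrow src tgt N 𝔽))
    fun k _ =>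
      (analyticAt_gaugeSeq_inv_apply (tgt α) i k).differentiableAt.hasFDerivAt_mul_of_eq_zero
      (hasFDerivAt_gaugeNumerator_apply A Γ α k j) (by rw [gaugeNumerator_zero]; rfl)
  refine this.congr_fderiv (ContinuousLinearMap.ext fun z => ?_)
  simp only [_root_.sum_apply, _root_.smul_apply, smul_eq_mul,
    gaugeSeq_zero, inv_one, Matrix.one_apply, ite_mul, one_mul, zero_mul, Finset.sum_ite_eq,
    Finset.mem_univ, if_true]

theorem exists_analyticAt_gauge (hsum : bracketSet A + eGamma (𝔽 := 𝔽) Γ = Set.univ) :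
    ∃ g : (QIdx V Arrow src tgt N → 𝔽) → GaugeParam V Arrow src tgt N 𝔽,
      g 0 = 0 ∧ AnalyticAt 𝔽 g 0 ∧
      ∀ᶠ m in 𝓝 0, (∀ v, IsUnit (gaugeSeq (g m) v)) ∧ gaugeMap A Γ (g m) = m := by
  obtain ⟨g, hg0, hg, hright⟩ := (analyticAt_gaugeMap A Γ).exists_rightInverse
    (hasFDerivAt_gaugeMap A Γ) (gaugeDerivLin_surjective A Γ hsum)
  rw [gaugeMap_zero] at hg0 hg hright
  refine ⟨g, hg0, hg, (eventually_all.mpr fun v => ?_).and hright⟩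
  refine AnalyticAt.eventually_isUnit_matrix (fun i j => ?_) ?_
  · exact (analyticAt_gaugeSeq_apply v i j (g 0)).comp hg
  · simp [hg0, gaugeSeq_zero]

end Analytic

end Gauge

/-- **Lemma 9 / Theorem 3 (reduction).** Let `A` be a representation of a quiver with
vertices `1,…,t` and let `Γ ⊆ Υ_{n⃗}` satisfy `R(n⃗,𝔽) = [𝔽^{n⃗×n⃗},A] ⊕ E_Γ`. Then there
are `δ > 0` and a map `M ↦ S(M)` assigning to each `M` with `‖M‖ < δ` an invertible
`n⃗`-sequence, whose entries depend holomorphically (real-analytically if `𝔽 = ℝ`) on the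
entries of `M`, such that `S(0) = I_{n⃗}` and `S(M)(A+M)S(M)⁻¹ − A ∈ E_Γ` whenever
`‖M‖ < δ`. -/
theorem global_reduction_to_EGamma
    {t : ℕ} {Arrow : Type} [Fintype Arrow] [DecidableEq Arrow]
    {src tgt : Arrow → Fin t} {N : Fin t → Type}
    [∀ v, Fintype (N v)] [∀ v, DecidableEq (N v)]
    {𝔽 : Type} [RCLike 𝔽]
    (A : QRep (Fin t) Arrow src tgt N 𝔽)
    (Γ : Finset (QIdx (Fin t) Arrow src tgt N))
    (hdirect : bracketSet A ∩ eGamma (𝔽 := 𝔽) Γ = {0} ∧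
      bracketSet A + eGamma (𝔽 := 𝔽) Γ = Set.univ) :
    ∃ δ : ℝ, 0 < δ ∧
      ∃ S : QRep (Fin t) Arrow src tgt N 𝔽 → QSeq (Fin t) N 𝔽,
        (S 0 = fun _ => 1) ∧
        (∀ v i j, AnalyticOnNhd 𝔽
          (fun f : QIdx (Fin t) Arrow src tgt N → 𝔽 => S (ofEntries f) v i j)
          {f | repNorm (ofEntries (𝔽 := 𝔽) f) < δ}) ∧
        ∀ M : QRep (Fin t) Arrow src tgt N 𝔽, repNorm M < δ →
          (∀ v, IsUnit (S M v)) ∧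
          (fun α => S M (tgt α) * (A α + M α) * (S M (src α))⁻¹ - A α)
            ∈ eGamma (𝔽 := 𝔽) Γ := by
  obtain ⟨g, hg0, hg, hgood⟩ := exists_analyticAt_gauge A Γ hdirect.2
  obtain ⟨r, hr, hgr⟩ := hg.exists_ball_analyticOnNhd
  obtain ⟨ε, hε, hgε⟩ := Metric.eventually_nhds_iff.mp hgood
  have hsmall : ∀ M : QRep (Fin t) Arrow src tgt N 𝔽, repNorm M < min ε r →
      ‖toEntries M‖ < ε ∧ ‖toEntries M‖ < r := fun M hM =>
    lt_min_iff.mp ((norm_toEntries_le_repNorm M).trans_lt hM)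
  refine ⟨min ε r, lt_min hε hr, fun M => gaugeSeq (g (toEntries M)), ?_, ?_, fun M hM => ?_⟩
  · simp only [toEntries_zero, hg0, gaugeSeq_zero]
  · exact fun v i j f hf =>
      (analyticAt_gaugeSeq_apply v i j _).comp (hgr _ (mem_ball_zero_iff.mpr (hsmall _ hf).2))
  · obtain ⟨hunit, hgM⟩ := hgε (mem_ball_zero_iff.mpr (hsmall M hM).1)
    exact ⟨hunit, conj_sub_mem_eGamma_of_gaugeMap_eq A Γ hunit hgM⟩
end
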